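/- arXiv:2508.10589 — 10 statements merged into one kernel-verified Lean document; each statement's English description precedes it below -/
import Mathlib

section
/- (Theorem 3.1) Let μ and ν be probability measures on X and let s^{(t)} be the constant utility function, s^{(t)}_{x,y} = 1 for every t ≥ 0 and every (x,y) ∈ N_t. Then W_∞(μ,ν) = τ_s(μ,ν). -/
open scoped BigOperators

noncomputable section

namespace WassersteinPaper

/-- Points of `ℝ^n` with the Euclidean distance. -/
abbrev Pt (n : ℕ) := EuclideanSpace ℝ (Fin n)

variable {n : ℕ} (X : Finset (Pt n))

/-- Total mass of a (discrete) measure on `X`. -/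
def mass1 (μ : X → ℝ) : ℝ := ∑ x, μ x

/-- `μ` is a positive measure on `X`. -/
def IsPositiveMeasure (μ : X → ℝ) : Prop := ∀ x, 0 ≤ μ x

/-- `μ` is a probability measure on `X`. -/
def IsProbMeasure (μ : X → ℝ) : Prop := IsPositiveMeasure X μ ∧ mass1 X μ = 1

/-- Total mass of a function on `X × X`. -/
def mass2 (η : X → X → ℝ) : ℝ := ∑ x, ∑ y, η x y

/-- `π` is a transportation plan between `μ` and `ν`. -/
def IsPlan (μ ν : X → ℝ) (π : X → X → ℝ) : Prop :=
  (∀ x y, 0 ≤ π x y) ∧ (∀ y, ∑ x, π x y = ν y) ∧ (∀ x, ∑ y, π x y = μ x)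

/-- `η` is a nearby flow between `μ` and `ν` with threshold `t`:
it is nonnegative, vanishes outside `N_t`, and its marginals are dominated by `μ` and `ν`. -/
def IsNearbyFlow (t : ℝ) (μ ν : X → ℝ) (η : X → X → ℝ) : Prop :=
  (∀ x y, 0 ≤ η x y) ∧
  (∀ x y : X, t < dist (x : Pt n) (y : Pt n) → η x y = 0) ∧
  (∀ y, ∑ x, η x y ≤ ν y) ∧ (∀ x, ∑ y, η x y ≤ μ x)

/-- Objective of the Maximum Nearby Flow problem with utility `s`
(since nearby flows vanish outside `N_t`, summing over all pairs agrees with summing over `N_t`). -/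
def MNFobj (s : X → X → ℝ) (η : X → X → ℝ) : ℝ := ∑ x, ∑ y, s x y * η x y

/-- `η` is an optimal solution (maximizer) of the Maximum Nearby Flow problem,
i.e. `η ∈ Θ^{(t)}_{μ,ν,s}`. -/
def IsMNFMaximizer (t : ℝ) (μ ν : X → ℝ) (s : X → X → ℝ) (η : X → X → ℝ) : Prop :=
  IsNearbyFlow X t μ ν η ∧
  ∀ η', IsNearbyFlow X t μ ν η' → MNFobj X s η' ≤ MNFobj X s η

/-- The set of thresholds `t ≥ 0` admitting an optimal nearby flow of total mass `1`. -/
def saturationSet (μ ν : X → ℝ) (s : ℝ → X → X → ℝ) : Set ℝ :=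
  {t | 0 ≤ t ∧ ∃ η, IsMNFMaximizer X t μ ν (s t) η ∧ mass2 X η = 1}

/-- The minimal saturation threshold `τ_s(μ,ν)`. -/
def tau (μ ν : X → ℝ) (s : ℝ → X → X → ℝ) : ℝ := sInf (saturationSet X μ ν s)

/-- The constant utility function `s^{(t)}_{x,y} = 1`. -/
def constUtility : ℝ → X → X → ℝ := fun _ _ _ => 1

/-- The complementary cost utility function `s^{(t)}_{x,y} = t - |x-y|`. -/
def complUtility : ℝ → X → X → ℝ := fun t x y => t - dist (x : Pt n) (y : Pt n)

/-- `T_∞(π)`: the longest mass movement described by `π`. -/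
def Tinf (π : X → X → ℝ) : ℝ :=
  sSup {r | ∃ x y : X, 0 < π x y ∧ r = dist (x : Pt n) (y : Pt n)}

/-- The infinity Wasserstein distance `W_∞(μ,ν)`. -/
def Winf (μ ν : X → ℝ) : ℝ :=
  sInf {r | ∃ π, IsPlan X μ ν π ∧ r = Tinf X π}

/-- The `p`-Wasserstein distance `W_p(μ,ν)`. -/
def Wp (p : ℝ) (μ ν : X → ℝ) : ℝ :=
  (sInf {c | ∃ π, IsPlan X μ ν π ∧
    c = ∑ x : X, ∑ y : X, (dist (x : Pt n) (y : Pt n)) ^ p * π x y}) ^ (1 / p)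

/-- The truncated `p`-Wasserstein distance `W_p^{(t)}(μ,ν)`. -/
def WpTrunc (p t : ℝ) (μ ν : X → ℝ) : ℝ :=
  (sInf {c | ∃ π, IsPlan X μ ν π ∧
    c = ∑ x : X, ∑ y : X, (min (dist (x : Pt n) (y : Pt n)) t) ^ p * π x y}) ^ (1 / p)

/-- The `1`-Wasserstein distance `W_1(μ,ν)`. -/
def W1 (μ ν : X → ℝ) : ℝ :=
  sInf {c | ∃ π, IsPlan X μ ν π ∧
    c = ∑ x : X, ∑ y : X, dist (x : Pt n) (y : Pt n) * π x y}

/-- The truncated `1`-Wasserstein distance `W_1^{(t)}(μ,ν)`. -/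
def W1Trunc (t : ℝ) (μ ν : X → ℝ) : ℝ :=
  sInf {c | ∃ π, IsPlan X μ ν π ∧
    c = ∑ x : X, ∑ y : X, min (dist (x : Pt n) (y : Pt n)) t * π x y}

/-- `ρ ∈ K_f`: `ρ` is a probability measure dominated by `f`. -/
def memKf (f ρ : X → ℝ) : Prop := IsProbMeasure X ρ ∧ ∀ x, ρ x ≤ f x

/-- The ball `B_t(x)` of radius `t` centred at `x`, as a finset of `X`. -/
def ball (t : ℝ) (x : X) : Finset X :=
  Finset.univ.filter (fun z : X => dist (x : Pt n) (z : Pt n) ≤ t)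

/-- The support-distance set used in `Tinf`. -/
def Rset (π : X → X → ℝ) : Set ℝ :=
  {r | ∃ x y : X, 0 < π x y ∧ r = dist (x : Pt n) (y : Pt n)}

lemma Tinf_eq_sSup_Rset (π : X → X → ℝ) : Tinf X π = sSup (Rset X π) := rfl

lemma Rset_finite (π : X → X → ℝ) : (Rset X π).Finite := by
  apply Set.Finite.subset
    (Set.finite_range (fun p : X × X => dist (p.1 : Pt n) (p.2 : Pt n)))
  rintro r ⟨x, y, -, rfl⟩
  exact ⟨(x, y), rfl⟩

lemma Rset_nonempty (π : X → X → ℝ) (hpos : ∀ x y, 0 ≤ π x y)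
    (hsum : ∑ x, ∑ y, π x y = 1) : (Rset X π).Nonempty := by
  have h : ∃ x y, 0 < π x y := by
    by_contra h
    push_neg at h
    have hz : ∀ x y, π x y = 0 := fun x y => le_antisymm (h x y) (hpos x y)
    simp only [hz, Finset.sum_const_zero] at hsum
    exact zero_ne_one hsum
  obtain ⟨x, y, hxy⟩ := h
  exact ⟨dist (x : Pt n) (y : Pt n), x, y, hxy, rfl⟩

lemma plan_mass (μ ν : X → ℝ) (hμ : IsProbMeasure X μ) {π : X → X → ℝ}
    (hπ : IsPlan X μ ν π) : ∑ x, ∑ y, π x y = 1 := by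
  have : ∑ x, ∑ y, π x y = ∑ x, μ x := Finset.sum_congr rfl fun x _ => hπ.2.2 x
  rw [this]; exact hμ.2

/-- Theorem 3.1: for the constant utility function,
`W_∞(μ,ν) = τ_s(μ,ν)`. -/
theorem stmt_3 (hX : X.Nonempty) (μ ν : X → ℝ)
    (hμ : IsProbMeasure X μ) (hν : IsProbMeasure X ν) :
    Winf X μ ν = tau X μ ν (constUtility X) := by
  classical
  set S : Set ℝ := {r | ∃ π, IsPlan X μ ν π ∧ r = Tinf X π} with hS
  -- basic facts about Tinf of a plan
  have hRprops : ∀ π : X → X → ℝ, IsPlan X μ ν π →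
      Tinf X π ∈ Rset X π ∧ 0 ≤ Tinf X π ∧
      (∀ x y : X, 0 < π x y → dist (x : Pt n) (y : Pt n) ≤ Tinf X π) := by
    intro π hπ
    have hne : (Rset X π).Nonempty :=
      Rset_nonempty X π hπ.1 (plan_mass X μ ν hμ hπ)
    have hfin := Rset_finite X π
    have hmem : Tinf X π ∈ Rset X π := by
      rw [Tinf_eq_sSup_Rset]; exact hne.csSup_mem hfin
    refine ⟨hmem, ?_, ?_⟩
    · obtain ⟨x, y, -, heq⟩ := hmem
      rw [heq]; exact dist_nonneg
    · intro x y hxy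
      exact le_csSup hfin.bddAbove ⟨x, y, hxy, rfl⟩
  -- S is nonempty: the product plan
  have hSne : S.Nonempty := by
    refine ⟨Tinf X (fun x y => μ x * ν y), fun x y => μ x * ν y, ⟨?_, ?_, ?_⟩, rfl⟩
    · exact fun x y => mul_nonneg (hμ.1 x) (hν.1 y)
    · intro y
      rw [← Finset.sum_mul]
      have : ∑ x, μ x = 1 := hμ.2
      rw [this, one_mul]
    · intro x
      rw [← Finset.mul_sum]
      have : ∑ y, ν y = 1 := hν.2
      rw [this, mul_one]
  have hSbdd : BddBelow S := by
    refine ⟨0, ?_⟩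
    rintro r ⟨π, hπ, rfl⟩
    exact (hRprops π hπ).2.1
  have hSfin : S.Finite := by
    apply Set.Finite.subset
      (Set.finite_range (fun p : X × X => dist (p.1 : Pt n) (p.2 : Pt n)))
    rintro r ⟨π, hπ, rfl⟩
    obtain ⟨x, y, -, heq⟩ := (hRprops π hπ).1
    exact ⟨(x, y), heq.symm⟩
  -- Winf is attained: an optimal plan π⋆
  have hWmem : Winf X μ ν ∈ S := hSne.csInf_mem hSfin
  obtain ⟨πs, hπs, hWeq⟩ := hWmem
  -- Winf is in the saturation set
  have hWsat : Winf X μ ν ∈ saturationSet X μ ν (constUtility X) := by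
    have hW0 : 0 ≤ Winf X μ ν := hWeq ▸ (hRprops πs hπs).2.1
    refine ⟨hW0, πs, ⟨⟨hπs.1, ?_, ?_, ?_⟩, ?_⟩, plan_mass X μ ν hμ hπs⟩
    · intro x y hd
      by_contra h
      have hpos : 0 < πs x y := lt_of_le_of_ne (hπs.1 x y) (Ne.symm h)
      have := (hRprops πs hπs).2.2 x y hpos
      rw [← hWeq] at this
      exact absurd this (not_le_of_gt hd)
    · intro y; exact le_of_eq (hπs.2.1 y)
    · intro x; exact le_of_eq (hπs.2.2 x)
    · intro η' hη'
      have h1 : MNFobj X (constUtility X (Winf X μ ν)) η' = ∑ x, ∑ y, η' x y := by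
        simp [MNFobj, constUtility]
      have h2 : MNFobj X (constUtility X (Winf X μ ν)) πs = ∑ x, ∑ y, πs x y := by
        simp [MNFobj, constUtility]
      rw [h1, h2, plan_mass X μ ν hμ hπs]
      calc ∑ x, ∑ y, η' x y ≤ ∑ x, μ x := Finset.sum_le_sum fun x _ => hη'.2.2.2 x
        _ = 1 := hμ.2
  -- tau ≤ Winf
  have h1 : tau X μ ν (constUtility X) ≤ Winf X μ ν :=
    csInf_le ⟨0, fun t ht => ht.1⟩ hWsat
  -- Winf ≤ tau
  have h2 : Winf X μ ν ≤ tau X μ ν (constUtility X) := by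
    apply le_csInf ⟨Winf X μ ν, hWsat⟩
    rintro t ⟨ht0, η, ⟨⟨hpos, hvan, hcol, hrow⟩, -⟩, hmass⟩
    -- η is a plan
    have hmass' : ∑ x, ∑ y, η x y = 1 := hmass
    have hcol' : ∀ y, ∑ x, η x y = ν y := by
      have hsum : ∑ y, ∑ x, η x y = ∑ y, ν y := by
        rw [Finset.sum_comm, hmass']
        exact hν.2.symm
      have := (Finset.sum_eq_sum_iff_of_le (fun y _ => hcol y)).mp hsum
      exact fun y => this y (Finset.mem_univ y)
    have hrow' : ∀ x, ∑ y, η x y = μ x := by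
      have hsum : ∑ x, ∑ y, η x y = ∑ x, μ x := by
        rw [hmass']; exact hμ.2.symm
      have := (Finset.sum_eq_sum_iff_of_le (fun x _ => hrow x)).mp hsum
      exact fun x => this x (Finset.mem_univ x)
    have hηplan : IsPlan X μ ν η := ⟨hpos, hcol', hrow'⟩
    have hTle : Tinf X η ≤ t := by
      rw [Tinf_eq_sSup_Rset]
      apply csSup_le (Rset_nonempty X η hpos hmass')
      rintro r ⟨x, y, hxy, rfl⟩
      by_contra h
      push_neg at h
      exact absurd (hvan x y h) (ne_of_gt hxy)
    calc Winf X μ ν ≤ Tinf X η := csInf_le hSbdd ⟨η, hηplan, rfl⟩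
      _ ≤ t := hTle
  linarith

end WassersteinPaper
end
end

section
/- (Theorem 3.2(i)) Let t ≥ 0, let μ, ν be probability measures on X, and let s^{(t)} be the complementary cost utility, s^{(t)}_{x,y} = t − |x−y| for (x,y) ∈ N_t. If there exists a maximizer η* ∈ Θ^{(t)}_{μ,ν,s} of the Maximum Nearby Flow problem with total mass |η*| = 1, then W_1^{(t)}(μ,ν) = W_1(μ,ν). -/
open scoped BigOperators

noncomputable section

namespace WassersteinPaper

variable {n : ℕ} (X : Finset (Pt n))

/-- Theorem 3.2(i): if the MNF problem with the complementary cost utility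
admits a maximizer of total mass `1`, then `W_1^{(t)}(μ,ν) = W_1(μ,ν)`. -/
theorem stmt_8 (hX : X.Nonempty) (t : ℝ) (ht : 0 ≤ t) (μ ν : X → ℝ)
    (hμ : IsProbMeasure X μ) (hν : IsProbMeasure X ν)
    (η : X → X → ℝ) (hη : IsMNFMaximizer X t μ ν (complUtility X t) η)
    (hmass : mass2 X η = 1) :
    W1Trunc X t μ ν = W1 X μ ν := by
  obtain ⟨⟨hηnn, hηsupp, hην, hημ⟩, hηopt⟩ := hη
  -- η is a transportation plan
  have hcol : ∀ y, ∑ x, η x y = ν y := by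
    have hνs : ∑ y, ν y = 1 := hν.2
    have h1 : ∑ y, ∑ x, η x y = ∑ y, ν y := by
      rw [hνs, ← hmass, mass2, Finset.sum_comm]
    intro y
    exact (Finset.sum_eq_sum_iff_of_le (fun i _ => hην i)).mp h1 y (Finset.mem_univ y)
  have hrow : ∀ x, ∑ y, η x y = μ x := by
    have hμs : ∑ x, μ x = 1 := hμ.2
    have h1 : ∑ x, ∑ y, η x y = ∑ x, μ x := by rw [hμs, ← hmass, mass2]
    intro x
    exact (Finset.sum_eq_sum_iff_of_le (fun i _ => hημ i)).mp h1 x (Finset.mem_univ x)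
  have hplan : IsPlan X μ ν η := ⟨hηnn, hcol, hrow⟩
  -- abbreviations
  set d : X → X → ℝ := fun x y => dist (x : Pt n) (y : Pt n) with hd
  have hdnn : ∀ x y, 0 ≤ d x y := fun x y => dist_nonneg
  -- splitting lemma
  have hsplit : ∀ f : X → X → ℝ,
      ∑ x, ∑ y, (t - min (d x y) t) * f x y
        = t * (∑ x, ∑ y, f x y) - ∑ x, ∑ y, min (d x y) t * f x y := by
    intro f
    rw [Finset.mul_sum, ← Finset.sum_sub_distrib]
    refine Finset.sum_congr rfl fun x _ => ?_
    rw [Finset.mul_sum, ← Finset.sum_sub_distrib]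
    exact Finset.sum_congr rfl fun y _ => by ring
  -- objective of η
  have hηmin : ∀ x y, min (d x y) t * η x y = d x y * η x y := by
    intro x y
    rcases le_or_gt (d x y) t with h | h
    · rw [min_eq_left h]
    · rw [hηsupp x y h, mul_zero, mul_zero]
  have hηpt : ∀ x y, complUtility X t x y * η x y = (t - min (d x y) t) * η x y := by
    intro x y
    rcases le_or_gt (d x y) t with h | h
    · rw [min_eq_left h]; rfl
    · rw [hηsupp x y h, mul_zero, mul_zero]
  have hηobj : MNFobj X (complUtility X t) η
      = t - ∑ x, ∑ y, d x y * η x y := by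
    unfold MNFobj
    calc ∑ x, ∑ y, complUtility X t x y * η x y
        = ∑ x, ∑ y, (t - min (d x y) t) * η x y := by
          exact Finset.sum_congr rfl fun x _ => Finset.sum_congr rfl fun y _ => hηpt x y
      _ = t * (∑ x, ∑ y, η x y) - ∑ x, ∑ y, min (d x y) t * η x y := hsplit η
      _ = t - ∑ x, ∑ y, d x y * η x y := by
          rw [show (∑ x, ∑ y, η x y) = 1 from hmass]
          rw [mul_one]
          congr 1
          exact Finset.sum_congr rfl fun x _ => Finset.sum_congr rfl fun y _ => hηmin x y
  -- key: cost of η is ≤ truncated cost of any plan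
  have key : ∀ π, IsPlan X μ ν π →
      (∑ x, ∑ y, d x y * η x y) ≤ ∑ x, ∑ y, min (d x y) t * π x y := by
    intro π hπ
    set η' : X → X → ℝ := fun x y => if d x y ≤ t then π x y else 0 with hη'
    have hflow : IsNearbyFlow X t μ ν η' := by
      refine ⟨fun x y => ?_, fun x y h => ?_, fun y => ?_, fun x => ?_⟩
      · simp only [hη']; split_ifs; exacts [hπ.1 x y, le_rfl]
      · simp only [hη']; rw [if_neg (not_le.mpr h)]
      · calc ∑ x, η' x y ≤ ∑ x, π x y := by
              refine Finset.sum_le_sum fun x _ => ?_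
              simp only [hη']; split_ifs; exacts [le_rfl, hπ.1 x y]
          _ = ν y := hπ.2.1 y
      · calc ∑ y, η' x y ≤ ∑ y, π x y := by
              refine Finset.sum_le_sum fun y _ => ?_
              simp only [hη']; split_ifs; exacts [le_rfl, hπ.1 x y]
          _ = μ x := hπ.2.2 x
    have hπmass : ∑ x, ∑ y, π x y = 1 := by
      rw [show (∑ x, ∑ y, π x y) = ∑ x, μ x from
        Finset.sum_congr rfl fun x _ => hπ.2.2 x]
      exact hμ.2
    have hobj' : MNFobj X (complUtility X t) η'
        = t - ∑ x, ∑ y, min (d x y) t * π x y := by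
      unfold MNFobj
      calc ∑ x, ∑ y, complUtility X t x y * η' x y
          = ∑ x, ∑ y, (t - min (d x y) t) * π x y := by
            refine Finset.sum_congr rfl fun x _ => Finset.sum_congr rfl fun y _ => ?_
            simp only [hη']
            rcases le_or_gt (d x y) t with h | h
            · rw [if_pos h, min_eq_left h]; rfl
            · rw [if_neg (not_le.mpr h), min_eq_right h.le, mul_zero, sub_self, zero_mul]
        _ = t * (∑ x, ∑ y, π x y) - ∑ x, ∑ y, min (d x y) t * π x y := hsplit π
        _ = t - ∑ x, ∑ y, min (d x y) t * π x y := by rw [hπmass, mul_one]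
    have := hηopt η' hflow
    rw [hobj', hηobj] at this
    linarith
  -- bounded below by 0 and nonemptiness
  have hbdd1 : BddBelow {c | ∃ π, IsPlan X μ ν π ∧
      c = ∑ x : X, ∑ y : X, dist (x : Pt n) (y : Pt n) * π x y} := by
    refine ⟨0, fun c hc => ?_⟩
    obtain ⟨π, hπ, rfl⟩ := hc
    exact Finset.sum_nonneg fun x _ => Finset.sum_nonneg fun y _ =>
      mul_nonneg dist_nonneg (hπ.1 x y)
  have hbddt : BddBelow {c | ∃ π, IsPlan X μ ν π ∧
      c = ∑ x : X, ∑ y : X, min (dist (x : Pt n) (y : Pt n)) t * π x y} := by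
    refine ⟨0, fun c hc => ?_⟩
    obtain ⟨π, hπ, rfl⟩ := hc
    exact Finset.sum_nonneg fun x _ => Finset.sum_nonneg fun y _ =>
      mul_nonneg (le_min dist_nonneg ht) (hπ.1 x y)
  have hW1le : W1 X μ ν ≤ ∑ x, ∑ y, d x y * η x y :=
    csInf_le hbdd1 ⟨η, hplan, rfl⟩
  have h1 : W1 X μ ν ≤ W1Trunc X t μ ν := by
    refine le_csInf ⟨_, η, hplan, rfl⟩ fun c hc => ?_
    obtain ⟨π, hπ, rfl⟩ := hc
    exact le_trans hW1le (key π hπ)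
  have h2 : W1Trunc X t μ ν ≤ W1 X μ ν := by
    refine le_csInf ⟨_, η, hplan, rfl⟩ fun c hc => ?_
    obtain ⟨π, hπ, rfl⟩ := hc
    calc W1Trunc X t μ ν ≤ ∑ x, ∑ y, min (d x y) t * π x y :=
          csInf_le hbddt ⟨π, hπ, rfl⟩
      _ ≤ ∑ x, ∑ y, d x y * π x y :=
          Finset.sum_le_sum fun x _ => Finset.sum_le_sum fun y _ =>
            mul_le_mul_of_nonneg_right (min_le_left _ _) (hπ.1 x y)
  linarith

end WassersteinPaper
end
end

section
/- (Theorem 3.2(ii)) Let t ≥ 0, let μ, ν be probability measures on X, and let s^{(t)} be the complementary cost utility, s^{(t)}_{x,y} = t − |x−y| for (x,y) ∈ N_t. Then for every maximizer η ∈ Θ^{(t)}_{μ,ν,s} with total mass |η| < 1 one has W_1(μ,ν) − W_1^{(t)}(μ,ν) ≤ ∑_{(x,y)∈X×X} (|x−y| − t)_+ · (μ_x − ∑_{y'∈B_t(x)} η_{x,y'}) (ν_y − ∑_{x'∈B_t(y)} η_{x',y}) / (1 − |η|), where (r)_+ = max{r, 0} and B_t(x) = {z ∈ X : |x−z| ≤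 t}. -/
open scoped BigOperators

noncomputable section

namespace WassersteinPaper

variable {n : ℕ} (X : Finset (Pt n))

/-- Theorem 3.2(ii): a-posteriori bound on `W_1 - W_1^{(t)}` in terms of a
maximizer `η` of the MNF problem (with complementary cost utility) of total mass `< 1`. -/
theorem stmt_9 (hX : X.Nonempty) (t : ℝ) (ht : 0 ≤ t) (μ ν : X → ℝ)
    (hμ : IsProbMeasure X μ) (hν : IsProbMeasure X ν)
    (η : X → X → ℝ) (hη : IsMNFMaximizer X t μ ν (complUtility X t) η)
    (hmass : mass2 X η < 1) :
    W1 X μ ν - W1Trunc X t μ ν ≤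
      ∑ x : X, ∑ y : X, max (dist (x : Pt n) (y : Pt n) - t) 0 *
        ((μ x - ∑ y' ∈ ball X t x, η x y') * (ν y - ∑ x' ∈ ball X t y, η x' y)) /
        (1 - mass2 X η) := by
  classical
  obtain ⟨⟨hη0, hηz, hηc, hηr⟩, hopt⟩ := hη
  obtain ⟨hμ0, hμ1⟩ := hμ
  obtain ⟨hν0, hν1⟩ := hν
  have hμ1' : ∑ x, μ x = 1 := hμ1
  have hν1' : ∑ x, ν x = 1 := hν1
  set m := mass2 X η with hm
  have hm' : m = ∑ x, ∑ y, η x y := hm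
  have hc0 : (0:ℝ) < 1 - m := by linarith
  have hne : (1:ℝ) - m ≠ 0 := ne_of_gt hc0
  set a : X → ℝ := fun x => μ x - ∑ y, η x y with ha
  set b : X → ℝ := fun y => ν y - ∑ x, η x y with hb
  have ha0 : ∀ x, 0 ≤ a x := fun x => by
    have := hηr x; simp only [ha]; linarith
  have hb0 : ∀ y, 0 ≤ b y := fun y => by
    have := hηc y; simp only [hb]; linarith
  have hsa : ∑ x, a x = 1 - m := by
    simp only [ha, Finset.sum_sub_distrib, hμ1', hm']
  have hsb : ∑ y, b y = 1 - m := by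
    simp only [hb, Finset.sum_sub_distrib, hν1', hm']
    rw [Finset.sum_comm]
  -- ball sums are full sums
  have hball1 : ∀ x : X, ∑ y' ∈ ball X t x, η x y' = ∑ y', η x y' := by
    intro x
    refine Finset.sum_subset (Finset.filter_subset _ _) ?_
    intro y _ hy
    refine hηz x y ?_
    by_contra h
    exact hy (Finset.mem_filter.mpr ⟨Finset.mem_univ _, not_lt.mp h⟩)
  have hball2 : ∀ y : X, ∑ x' ∈ ball X t y, η x' y = ∑ x', η x' y := by
    intro y
    refine Finset.sum_subset (Finset.filter_subset _ _) ?_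
    intro x _ hx
    refine hηz x y ?_
    rw [dist_comm]
    by_contra h
    exact hx (Finset.mem_filter.mpr ⟨Finset.mem_univ _, not_lt.mp h⟩)
  -- rewrite the goal RHS
  have hRHS : (∑ x : X, ∑ y : X, max (dist (x : Pt n) (y : Pt n) - t) 0 *
        ((μ x - ∑ y' ∈ ball X t x, η x y') * (ν y - ∑ x' ∈ ball X t y, η x' y)) /
        (1 - m))
      = ∑ x : X, ∑ y : X, max (dist (x : Pt n) (y : Pt n) - t) 0 * (a x * b y) / (1 - m) := by
    refine Finset.sum_congr rfl fun x _ => Finset.sum_congr rfl fun y _ => ?_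
    rw [hball1 x, hball2 y]
  rw [hRHS]
  -- the extended plan
  have hplan : IsPlan X μ ν (fun x y => η x y + a x * b y / (1 - m)) := by
    refine ⟨fun x y => ?_, fun y => ?_, fun x => ?_⟩
    · have : 0 ≤ a x * b y / (1 - m) :=
        div_nonneg (mul_nonneg (ha0 x) (hb0 y)) (le_of_lt hc0)
      have := hη0 x y
      linarith
    · have h1 : ∑ x, (η x y + a x * b y / (1 - m))
          = (∑ x, η x y) + (∑ x, a x) * (b y / (1 - m)) := by
        rw [Finset.sum_add_distrib, Finset.sum_mul]
        congr 1
        exact Finset.sum_congr rfl fun x _ => by ring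
      rw [h1, hsa]
      have h2 : (1 - m) * (b y / (1 - m)) = b y := by field_simp
      rw [h2]
      have : b y = ν y - ∑ x, η x y := rfl
      linarith
    · have h1 : ∑ y, (η x y + a x * b y / (1 - m))
          = (∑ y, η x y) + (a x / (1 - m)) * ∑ y, b y := by
        rw [Finset.sum_add_distrib, Finset.mul_sum]
        congr 1
        exact Finset.sum_congr rfl fun y _ => by ring
      rw [h1, hsb]
      have h2 : (a x / (1 - m)) * (1 - m) = a x := by field_simp
      rw [h2]
      have : a x = μ x - ∑ y, η x y := rfl
      linarith
  -- W1 upper bound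
  have hW1le : W1 X μ ν ≤ ∑ x : X, ∑ y : X, dist (x : Pt n) (y : Pt n) * (η x y + a x * b y / (1 - m)) := by
    refine csInf_le ⟨0, fun c hc => ?_⟩ ⟨_, hplan, rfl⟩
    obtain ⟨π', hπ', rfl⟩ := hc
    exact Finset.sum_nonneg fun x _ => Finset.sum_nonneg fun y _ =>
      mul_nonneg dist_nonneg (hπ'.1 x y)
  -- W1Trunc lower bound
  have hW1tge : t - MNFobj X (complUtility X t) η ≤ W1Trunc X t μ ν := by
    refine le_csInf ⟨∑ x : X, ∑ y : X, min (dist (x : Pt n) (y : Pt n)) t * (μ x * ν y),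
      fun x y => μ x * ν y, ?_, rfl⟩ ?_
    · refine ⟨fun x y => mul_nonneg (hμ0 x) (hν0 y), fun y => ?_, fun x => ?_⟩
      · rw [← Finset.sum_mul, hμ1', one_mul]
      · rw [← Finset.mul_sum, hν1', mul_one]
    · rintro c ⟨π', ⟨hπ'0, hπ'c, hπ'r⟩, rfl⟩
      set η' : X → X → ℝ := fun x y =>
        if dist (x : Pt n) (y : Pt n) ≤ t then π' x y else 0 with hη'
      have hflow : IsNearbyFlow X t μ ν η' := by
        refine ⟨fun x y => ?_, fun x y h => ?_, fun y => ?_, fun x => ?_⟩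
        · simp only [hη']; split
          · exact hπ'0 x y
          · exact le_refl _
        · simp only [hη', if_neg (not_le.mpr h)]
        · calc ∑ x, η' x y ≤ ∑ x, π' x y := by
                refine Finset.sum_le_sum fun x _ => ?_
                simp only [hη']; split
                · exact le_refl _
                · exact hπ'0 x y
            _ = ν y := hπ'c y
        · calc ∑ y, η' x y ≤ ∑ y, π' x y := by
                refine Finset.sum_le_sum fun y _ => ?_
                simp only [hη']; split
                · exact le_refl _
                · exact hπ'0 x y
            _ = μ x := hπ'r x
      have hle := hopt η' hflow
      have hobj : MNFobj X (complUtility X t) η'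
          = ∑ x : X, ∑ y : X, max (t - dist (x : Pt n) (y : Pt n)) 0 * π' x y := by
        refine Finset.sum_congr rfl fun x _ => Finset.sum_congr rfl fun y _ => ?_
        show (t - dist (x : Pt n) (y : Pt n)) * η' x y = _
        simp only [hη']
        rcases le_or_gt (dist (x : Pt n) (y : Pt n)) t with h | h
        · rw [if_pos h, max_eq_left (by linarith)]
        · rw [if_neg (not_le.mpr h), max_eq_right (by linarith), mul_zero, zero_mul]
      have htot : ∑ x, ∑ y, π' x y = 1 := by
        calc ∑ x, ∑ y, π' x y = ∑ x, μ x := Finset.sum_congr rfl fun x _ => hπ'r x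
          _ = 1 := hμ1'
      have hsplit : ∑ x : X, ∑ y : X, min (dist (x : Pt n) (y : Pt n)) t * π' x y
          = (∑ x, ∑ y, t * π' x y)
            - ∑ x : X, ∑ y : X, max (t - dist (x : Pt n) (y : Pt n)) 0 * π' x y := by
        rw [← Finset.sum_sub_distrib]
        refine Finset.sum_congr rfl fun x _ => ?_
        rw [← Finset.sum_sub_distrib]
        refine Finset.sum_congr rfl fun y _ => ?_
        rcases le_or_gt (dist (x : Pt n) (y : Pt n)) t with h | h
        · rw [min_eq_left h, max_eq_left (by linarith)]; ring
        · rw [min_eq_right (le_of_lt h), max_eq_right (by linarith)]; ring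
      have htη : ∑ x, ∑ y, t * π' x y = t := by
        calc ∑ x, ∑ y, t * π' x y = t * ∑ x, ∑ y, π' x y := by
              rw [Finset.mul_sum]
              exact Finset.sum_congr rfl fun x _ => (Finset.mul_sum _ _ _).symm
          _ = t := by rw [htot, mul_one]
      rw [hsplit, htη]
      rw [hobj] at hle
      linarith
  -- key sum identity and final estimate
  have hsum1 : ∑ x : X, ∑ y : X, t * η x y = t * m := by
    calc ∑ x : X, ∑ y : X, t * η x y = t * ∑ x, ∑ y, η x y := by
          rw [Finset.mul_sum]
          exact Finset.sum_congr rfl fun x _ => (Finset.mul_sum _ _ _).symm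
      _ = t * m := by rw [← hm']
  have hsum2 : ∑ x, ∑ y, t * (a x * b y) / (1 - m) = t * (1 - m) := by
    have inner : ∀ x : X, ∑ y, t * (a x * b y) / (1 - m) = t * a x := by
      intro x
      have h3 : ∑ y, t * (a x * b y) / (1 - m) = (t * a x / (1 - m)) * ∑ y, b y := by
        rw [Finset.mul_sum]
        exact Finset.sum_congr rfl fun y _ => by ring
      rw [h3, hsb]
      field_simp
    calc ∑ x, ∑ y, t * (a x * b y) / (1 - m) = ∑ x, t * a x :=
          Finset.sum_congr rfl fun x _ => inner x
      _ = t * ∑ x, a x := (Finset.mul_sum _ _ _).symm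
      _ = t * (1 - m) := by rw [hsa]
  have hMNF : MNFobj X (complUtility X t) η
      = ∑ x : X, ∑ y : X, (t - dist (x : Pt n) (y : Pt n)) * η x y := rfl
  have expand : ∑ x : X, ∑ y : X, ((dist (x : Pt n) (y : Pt n) - t) * (a x * b y) / (1 - m))
      = (∑ x : X, ∑ y : X, dist (x : Pt n) (y : Pt n) * (η x y + a x * b y / (1 - m)))
        + (∑ x : X, ∑ y : X, (t - dist (x : Pt n) (y : Pt n)) * η x y)
        - ((∑ x : X, ∑ y : X, t * η x y) + ∑ x, ∑ y, t * (a x * b y) / (1 - m)) := by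
    rw [← Finset.sum_add_distrib, ← Finset.sum_add_distrib, ← Finset.sum_sub_distrib]
    refine Finset.sum_congr rfl fun x _ => ?_
    rw [← Finset.sum_add_distrib, ← Finset.sum_add_distrib, ← Finset.sum_sub_distrib]
    refine Finset.sum_congr rfl fun y _ => ?_
    ring
  have hexp : (∑ x : X, ∑ y : X, dist (x : Pt n) (y : Pt n) * (η x y + a x * b y / (1 - m)))
      - (t - MNFobj X (complUtility X t) η)
      = ∑ x : X, ∑ y : X, ((dist (x : Pt n) (y : Pt n) - t) * (a x * b y) / (1 - m)) := by
    rw [hMNF, expand, hsum1, hsum2]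
    ring
  have hfinal : ∑ x : X, ∑ y : X, ((dist (x : Pt n) (y : Pt n) - t) * (a x * b y) / (1 - m))
      ≤ ∑ x : X, ∑ y : X, max (dist (x : Pt n) (y : Pt n) - t) 0 * (a x * b y) / (1 - m) := by
    refine Finset.sum_le_sum fun x _ => Finset.sum_le_sum fun y _ => ?_
    have hab : 0 ≤ a x * b y := mul_nonneg (ha0 x) (hb0 y)
    have h4 : (dist (x : Pt n) (y : Pt n) - t) * (a x * b y)
        ≤ max (dist (x : Pt n) (y : Pt n) - t) 0 * (a x * b y) :=
      mul_le_mul_of_nonneg_right (le_max_left _ _) hab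
    exact div_le_div_of_nonneg_right h4 hc0.le
  linarith [hexp, hW1le, hW1tge, hfinal]

end WassersteinPaper
end
end

section
/- Let t ≥ 0, let μ, ν be probability measures on X with W_1^{(t)}(μ,ν) > 0, and let s^{(t)} be the complementary cost utility, s^{(t)}_{x,y} = t − |x−y| for (x,y) ∈ N_t. Then for every maximizer η ∈ Θ^{(t)}_{μ,ν,s} with total mass |η| < 1, the relative error satisfies |W_1(μ,ν) − W_1^{(t)}(μ,ν)| / W_1(μ,ν) ≤ (∑_{(x,y)∈X×X} (|x−y| − t)_+ μ̃_x ν̃_y) / ((1 − |η|) W_1^{(t)}(μ,ν)), where μ̃_x = μ_x − ∑_{y∈B_t(x)} η_{x,y}, ν̃_y = ν_y − ∑_{x∈B_t(y)} η_{x,y}, (r)_+ = max{r, 0}, and B_t(x) = {z ∈ X : |x−z| ≤ t}. -/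
open scoped BigOperators

noncomputable section

namespace WassersteinPaper

variable {n : ℕ} (X : Finset (Pt n))

/-- a-posteriori bound on the relative error
`|W_1 - W_1^{(t)}| / W_1` in terms of a maximizer `η` of the MNF problem
(with complementary cost utility) of total mass `< 1`. -/
theorem stmt_10 (hX : X.Nonempty) (t : ℝ) (ht : 0 ≤ t) (μ ν : X → ℝ)
    (hμ : IsProbMeasure X μ) (hν : IsProbMeasure X ν)
    (hW : 0 < W1Trunc X t μ ν)
    (η : X → X → ℝ) (hη : IsMNFMaximizer X t μ ν (complUtility X t) η)
    (hmass : mass2 X η < 1) :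
    |W1 X μ ν - W1Trunc X t μ ν| / W1 X μ ν ≤
      (∑ x : X, ∑ y : X, max (dist (x : Pt n) (y : Pt n) - t) 0 *
        ((μ x - ∑ y' ∈ ball X t x, η x y') * (ν y - ∑ x' ∈ ball X t y, η x' y))) /
      ((1 - mass2 X η) * W1Trunc X t μ ν) := by
  classical
  obtain ⟨⟨hη0, hηvan, hηcol, hηrow⟩, hηmax⟩ := hη
  obtain ⟨hμ0, hμ1⟩ := hμ
  obtain ⟨hν0, hν1⟩ := hν
  have hμsum : ∑ x, μ x = 1 := hμ1
  have hνsum : ∑ y, ν y = 1 := hν1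
  set m := mass2 X η with hm_def
  have hmeq : ∑ x, ∑ y, η x y = m := rfl
  have hmeq' : ∑ y : X, ∑ x : X, η x y = m := by rw [Finset.sum_comm]; rfl
  have hm : 0 < 1 - m := by linarith
  have hmne : (1 - m) ≠ 0 := ne_of_gt hm
  set μ' : X → ℝ := fun x => μ x - ∑ y, η x y with hμ'def
  set ν' : X → ℝ := fun y => ν y - ∑ x, η x y with hν'def
  have hμ'0 : ∀ x, 0 ≤ μ' x := fun x => sub_nonneg.2 (hηrow x)
  have hν'0 : ∀ y, 0 ≤ ν' y := fun y => sub_nonneg.2 (hηcol y)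
  have hμ'sum : ∑ x, μ' x = 1 - m := by
    simp only [hμ'def, Finset.sum_sub_distrib, hμsum, hmeq]
  have hν'sum : ∑ y, ν' y = 1 - m := by
    simp only [hν'def, Finset.sum_sub_distrib, hνsum, hmeq']
  have hball1 : ∀ x : X, ∑ y' ∈ ball X t x, η x y' = ∑ y, η x y := by
    intro x
    refine Finset.sum_subset (Finset.subset_univ _) (fun y _ hy => ?_)
    simp only [ball, Finset.mem_filter, Finset.mem_univ, true_and] at hy
    exact hηvan x y (not_le.mp hy)
  have hball2 : ∀ y : X, ∑ x' ∈ ball X t y, η x' y = ∑ x, η x y := by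
    intro y
    refine Finset.sum_subset (Finset.subset_univ _) (fun x _ hx => ?_)
    simp only [ball, Finset.mem_filter, Finset.mem_univ, true_and] at hx
    exact hηvan x y (by rw [dist_comm]; exact not_le.mp hx)
  -- the constructed plan
  set π : X → X → ℝ := fun x y => η x y + μ' x * ν' y / (1 - m) with hπdef
  have hπ0 : ∀ x y, 0 ≤ π x y := fun x y =>
    add_nonneg (hη0 x y) (div_nonneg (mul_nonneg (hμ'0 x) (hν'0 y)) hm.le)
  have hπplan : IsPlan X μ ν π := by
    refine ⟨hπ0, fun y => ?_, fun x => ?_⟩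
    · have h1 : ∀ x : X, μ' x * ν' y / (1 - m) = μ' x * (ν' y / (1 - m)) := fun x => by ring
      have : ∑ x, π x y = (∑ x, η x y) + (∑ x, μ' x) * (ν' y / (1 - m)) := by
        simp only [hπdef, h1, Finset.sum_add_distrib, ← Finset.sum_mul]
      rw [this, hμ'sum, mul_div_cancel₀ _ hmne]
      simp [hν'def]
    · have h1 : ∀ y : X, μ' x * ν' y / (1 - m) = (μ' x / (1 - m)) * ν' y := fun y => by ring
      have : ∑ y, π x y = (∑ y, η x y) + (μ' x / (1 - m)) * (∑ y, ν' y) := by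
        simp only [hπdef, h1, Finset.sum_add_distrib, ← Finset.mul_sum]
      rw [this, hν'sum, div_mul_cancel₀ _ hmne]
      simp [hμ'def]
  -- quantities
  set D : ℝ := ∑ x : X, ∑ y : X, dist (x : Pt n) (y : Pt n) * η x y with hDdef
  set S : ℝ := ∑ x : X, ∑ y : X,
    max (dist (x : Pt n) (y : Pt n) - t) 0 * (μ' x * ν' y) with hSdef
  have hSnn : 0 ≤ S := by
    refine Finset.sum_nonneg fun x _ => Finset.sum_nonneg fun y _ => ?_
    exact mul_nonneg (le_max_right _ _) (mul_nonneg (hμ'0 x) (hν'0 y))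
  -- cost splitting for π
  have hsplit : (∑ x : X, ∑ y : X, dist (x : Pt n) (y : Pt n) * π x y)
      = (∑ x : X, ∑ y : X, min (dist (x : Pt n) (y : Pt n)) t * π x y) + S / (1 - m) := by
    have hpt : ∀ x y : X, dist (x : Pt n) (y : Pt n) * π x y
        = min (dist (x : Pt n) (y : Pt n)) t * π x y
          + max (dist (x : Pt n) (y : Pt n) - t) 0 * (μ' x * ν' y) / (1 - m) := by
      intro x y
      rcases le_or_gt (dist (x : Pt n) (y : Pt n)) t with h | h
      · rw [min_eq_left h, max_eq_right (sub_nonpos.2 h)]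
        ring
      · rw [min_eq_right h.le, max_eq_left (by linarith), hπdef]
        simp only [hηvan x y h]
        ring
    calc (∑ x : X, ∑ y : X, dist (x : Pt n) (y : Pt n) * π x y)
        = ∑ x : X, ∑ y : X, (min (dist (x : Pt n) (y : Pt n)) t * π x y
          + max (dist (x : Pt n) (y : Pt n) - t) 0 * (μ' x * ν' y) / (1 - m)) :=
          Finset.sum_congr rfl fun x _ => Finset.sum_congr rfl fun y _ => hpt x y
      _ = (∑ x : X, ∑ y : X, min (dist (x : Pt n) (y : Pt n)) t * π x y) + S / (1 - m) := by
          simp only [Finset.sum_add_distrib, hSdef, Finset.sum_div]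
  -- upper bound on the truncated cost of π
  have hCm : (∑ x : X, ∑ y : X, min (dist (x : Pt n) (y : Pt n)) t * π x y)
      ≤ D + t * (1 - m) := by
    have hpt : ∀ x y : X, min (dist (x : Pt n) (y : Pt n)) t * π x y
        ≤ dist (x : Pt n) (y : Pt n) * η x y + (t / (1 - m)) * (μ' x * ν' y) := by
      intro x y
      have h1 : min (dist (x : Pt n) (y : Pt n)) t * η x y
          = dist (x : Pt n) (y : Pt n) * η x y := by
        rcases le_or_gt (dist (x : Pt n) (y : Pt n)) t with h | h
        · rw [min_eq_left h]
        · rw [hηvan x y h]; ring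
      have h2 : min (dist (x : Pt n) (y : Pt n)) t * (μ' x * ν' y / (1 - m))
          ≤ t * (μ' x * ν' y / (1 - m)) :=
        mul_le_mul_of_nonneg_right (min_le_right _ _)
          (div_nonneg (mul_nonneg (hμ'0 x) (hν'0 y)) hm.le)
      have h3 : min (dist (x : Pt n) (y : Pt n)) t * π x y
          = min (dist (x : Pt n) (y : Pt n)) t * η x y
            + min (dist (x : Pt n) (y : Pt n)) t * (μ' x * ν' y / (1 - m)) := by
        rw [hπdef]; ring
      have h4 : t * (μ' x * ν' y / (1 - m)) = (t / (1 - m)) * (μ' x * ν' y) := by ring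
      rw [h3, h1]
      linarith [h2, h4.le]
    have hsum : (∑ x : X, ∑ y : X, (dist (x : Pt n) (y : Pt n) * η x y
        + (t / (1 - m)) * (μ' x * ν' y))) = D + t * (1 - m) := by
      have hps : (∑ x : X, ∑ y : X, (t / (1 - m)) * (μ' x * ν' y))
          = (t / (1 - m)) * ((∑ x, μ' x) * (∑ y, ν' y)) := by
        rw [Finset.sum_mul_sum]
        simp only [Finset.mul_sum]
      simp only [Finset.sum_add_distrib, hps, hμ'sum, hν'sum, hDdef]
      field_simp
    calc (∑ x : X, ∑ y : X, min (dist (x : Pt n) (y : Pt n)) t * π x y)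
        ≤ ∑ x : X, ∑ y : X, (dist (x : Pt n) (y : Pt n) * η x y
          + (t / (1 - m)) * (μ' x * ν' y)) :=
          Finset.sum_le_sum fun x _ => Finset.sum_le_sum fun y _ => hpt x y
      _ = D + t * (1 - m) := hsum
  -- boundedness / nonemptiness facts
  have hbdd1 : ∀ c ∈ {c | ∃ π, IsPlan X μ ν π ∧
      c = ∑ x : X, ∑ y : X, dist (x : Pt n) (y : Pt n) * π x y}, (0:ℝ) ≤ c := by
    rintro c ⟨π', hπ', rfl⟩
    exact Finset.sum_nonneg fun x _ => Finset.sum_nonneg fun y _ =>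
      mul_nonneg dist_nonneg (hπ'.1 x y)
  have hbddt : ∀ c ∈ {c | ∃ π, IsPlan X μ ν π ∧
      c = ∑ x : X, ∑ y : X, min (dist (x : Pt n) (y : Pt n)) t * π x y}, (0:ℝ) ≤ c := by
    rintro c ⟨π', hπ', rfl⟩
    exact Finset.sum_nonneg fun x _ => Finset.sum_nonneg fun y _ =>
      mul_nonneg (le_min dist_nonneg ht) (hπ'.1 x y)
  have hprodplan : IsPlan X μ ν (fun x y => μ x * ν y) := by
    refine ⟨fun x y => mul_nonneg (hμ0 x) (hν0 y), fun y => ?_, fun x => ?_⟩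
    · rw [← Finset.sum_mul, hμsum, one_mul]
    · rw [← Finset.mul_sum, hνsum, mul_one]
  -- W1 ≤ cost of π
  have hW1le : W1 X μ ν ≤ ∑ x : X, ∑ y : X, dist (x : Pt n) (y : Pt n) * π x y :=
    csInf_le ⟨0, hbdd1⟩ ⟨π, hπplan, rfl⟩
  -- lower bound on W1Trunc via optimality of η
  have hobjη : MNFobj X (complUtility X t) η = t * m - D := by
    simp only [MNFobj, complUtility, sub_mul, Finset.sum_sub_distrib, hDdef,
      ← Finset.mul_sum, hmeq]
  have hWt_lb : t * (1 - m) + D ≤ W1Trunc X t μ ν := by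
    refine le_csInf ⟨_, fun x y => μ x * ν y, hprodplan, rfl⟩ ?_
    rintro c ⟨π', hπ', rfl⟩
    obtain ⟨hπ'0, hπ'col, hπ'row⟩ := hπ'
    set η' : X → X → ℝ := fun x y =>
      if dist (x : Pt n) (y : Pt n) ≤ t then π' x y else 0 with hη'def
    have hnf : IsNearbyFlow X t μ ν η' := by
      refine ⟨fun x y => ?_, fun x y h => ?_, fun y => ?_, fun x => ?_⟩
      · simp only [hη'def]
        split
        · exact hπ'0 x y
        · exact le_refl _
      · simp only [hη'def]; rw [if_neg (not_le.mpr h)]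
      · calc ∑ x, η' x y ≤ ∑ x, π' x y := by
              refine Finset.sum_le_sum fun x _ => ?_
              simp only [hη'def]
              split
              · exact le_refl _
              · exact hπ'0 x y
          _ = ν y := hπ'col y
      · calc ∑ y, η' x y ≤ ∑ y, π' x y := by
              refine Finset.sum_le_sum fun y _ => ?_
              simp only [hη'def]
              split
              · exact le_refl _
              · exact hπ'0 x y
          _ = μ x := hπ'row x
    have hopt := hηmax η' hnf
    have hπ'mass : ∑ x : X, ∑ y : X, π' x y = 1 := by
      calc ∑ x : X, ∑ y : X, π' x y = ∑ x, μ x := Finset.sum_congr rfl fun x _ => hπ'row x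
        _ = 1 := hμsum
    have hcost : (∑ x : X, ∑ y : X, min (dist (x : Pt n) (y : Pt n)) t * π' x y)
        = t - MNFobj X (complUtility X t) η' := by
      have hpt : ∀ x y : X, min (dist (x : Pt n) (y : Pt n)) t * π' x y
          = t * π' x y - (t - dist (x : Pt n) (y : Pt n)) * η' x y := by
        intro x y
        simp only [hη'def]
        rcases le_or_gt (dist (x : Pt n) (y : Pt n)) t with h | h
        · rw [min_eq_left h, if_pos h]; ring
        · rw [min_eq_right h.le, if_neg (not_le.mpr h)]; ring
      calc (∑ x : X, ∑ y : X, min (dist (x : Pt n) (y : Pt n)) t * π' x y)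
          = ∑ x : X, ∑ y : X, (t * π' x y - (t - dist (x : Pt n) (y : Pt n)) * η' x y) :=
            Finset.sum_congr rfl fun x _ => Finset.sum_congr rfl fun y _ => hpt x y
        _ = t * (∑ x : X, ∑ y : X, π' x y) - MNFobj X (complUtility X t) η' := by
            simp only [Finset.sum_sub_distrib, MNFobj, complUtility, ← Finset.mul_sum]
        _ = t - MNFobj X (complUtility X t) η' := by rw [hπ'mass, mul_one]
    rw [hcost]
    rw [hobjη] at hopt
    linarith
  -- W1Trunc ≤ W1
  have hWtleW1 : W1Trunc X t μ ν ≤ W1 X μ ν := by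
    refine le_csInf ⟨_, fun x y => μ x * ν y, hprodplan, rfl⟩ ?_
    rintro c ⟨π', hπ', rfl⟩
    refine le_trans (csInf_le ⟨0, hbddt⟩ ⟨π', hπ', rfl⟩) ?_
    exact Finset.sum_le_sum fun x _ => Finset.sum_le_sum fun y _ =>
      mul_le_mul_of_nonneg_right (min_le_left _ _) (hπ'.1 x y)
  have hkey : W1 X μ ν ≤ W1Trunc X t μ ν + S / (1 - m) := by
    rw [hsplit] at hW1le
    linarith
  have hW1pos : 0 < W1 X μ ν := lt_of_lt_of_le hW hWtleW1
  have hgoalS : (∑ x : X, ∑ y : X, max (dist (x : Pt n) (y : Pt n) - t) 0 *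
      ((μ x - ∑ y' ∈ ball X t x, η x y') * (ν y - ∑ x' ∈ ball X t y, η x' y))) = S := by
    refine Finset.sum_congr rfl fun x _ => Finset.sum_congr rfl fun y _ => ?_
    rw [hball1 x, hball2 y]
  rw [hgoalS, abs_of_nonneg (sub_nonneg.2 hWtleW1)]
  calc (W1 X μ ν - W1Trunc X t μ ν) / W1 X μ ν
      ≤ (S / (1 - m)) / W1Trunc X t μ ν :=
        div_le_div₀ (div_nonneg hSnn hm.le) (by linarith) hW hWtleW1
    _ = S / ((1 - m) * W1Trunc X t μ ν) := by rw [div_div]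

end WassersteinPaper
end
end

section
/- (Reconstruction of a transportation plan from a nearby flow) Let t ≥ 0, let μ, ν be probability measures on X, and let η ∈ N^{(t)}_{μ,ν} be a nearby flow with total mass |η| < 1. Define ζ : X×X → [0,∞) by ζ_{x,y} = (μ_x − ∑_{v∈B_t(x)} η_{x,v})(ν_y − ∑_{u∈B_t(y)} η_{u,y}) / (1 − |η|), where B_t(x) = {z ∈ X : |x−z| ≤ t}. Then π := η + ζ is a transportation plan between μ and ν, i.e. ∑_{x∈X} π_{x,y} = ν_y for all y ∈ X and ∑_{y∈X} π_{x,y} = μ_x for all x ∈ X. -/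
open scoped BigOperators

noncomputable section

namespace WassersteinPaper

variable {n : ℕ} (X : Finset (Pt n))

/-- reconstruction of a transportation plan from a nearby flow:
if `η` is a nearby flow of total mass `< 1` and `ζ` is the product of the residual
marginals normalised by `1 - |η|`, then `η + ζ` is a transportation plan. -/
theorem stmt_12 (hX : X.Nonempty) (t : ℝ) (ht : 0 ≤ t) (μ ν : X → ℝ)
    (hμ : IsProbMeasure X μ) (hν : IsProbMeasure X ν)
    (η : X → X → ℝ) (hη : IsNearbyFlow X t μ ν η) (hmass : mass2 X η < 1)
    (ζ : X → X → ℝ)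
    (hζ : ∀ x y : X, ζ x y =
      (μ x - ∑ v ∈ ball X t x, η x v) * (ν y - ∑ u ∈ ball X t y, η u y) /
        (1 - mass2 X η)) :
    IsPlan X μ ν (fun x y => η x y + ζ x y) := by
  obtain ⟨hpos, hvan, hcol, hrow⟩ := hη
  have hball1 : ∀ x : X, ∑ v ∈ ball X t x, η x v = ∑ v, η x v := by
    intro x
    exact Finset.sum_filter_of_ne (fun v _ hne => by
      by_contra h
      exact hne (hvan x v (lt_of_not_ge h)))
  have hball2 : ∀ y : X, ∑ u ∈ ball X t y, η u y = ∑ u, η u y := by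
    intro y
    refine Finset.sum_filter_of_ne (fun u _ hne => ?_)
    by_contra h
    exact hne (hvan u y (by rw [dist_comm]; exact lt_of_not_ge h))
  set a : X → ℝ := fun x => μ x - ∑ v, η x v with ha
  set b : X → ℝ := fun y => ν y - ∑ u, η u y with hb
  have hζ' : ∀ x y, ζ x y = a x * b y / (1 - mass2 X η) := by
    intro x y; rw [hζ x y, hball1, hball2]
  have hapos : ∀ x, 0 ≤ a x := fun x => sub_nonneg.2 (hrow x)
  have hbpos : ∀ y, 0 ≤ b y := fun y => sub_nonneg.2 (hcol y)
  have hmpos : 0 < 1 - mass2 X η := by linarith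
  have hsa : ∑ x, a x = 1 - mass2 X η := by
    have h1 : (∑ x, μ x) = 1 := hμ.2
    rw [ha, Finset.sum_sub_distrib, h1, mass2]
  have hsb : ∑ y, b y = 1 - mass2 X η := by
    have h1 : (∑ y, ν y) = 1 := hν.2
    have h2 : (∑ y, ∑ u, η u y) = mass2 X η := Finset.sum_comm
    rw [hb, Finset.sum_sub_distrib, h1, h2]
  refine ⟨fun x y => ?_, fun y => ?_, fun x => ?_⟩
  · have : 0 ≤ ζ x y := by
      rw [hζ']
      exact div_nonneg (mul_nonneg (hapos x) (hbpos y)) hmpos.le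
    exact add_nonneg (hpos x y) this
  · have hz : ∑ x, ζ x y = b y := by
      simp only [hζ']
      rw [← Finset.sum_div, ← Finset.sum_mul, hsa, mul_comm, mul_div_assoc,
        div_self hmpos.ne', mul_one]
    rw [Finset.sum_add_distrib, hz]
    simp only [hb]
    ring
  · have hz : ∑ y, ζ x y = a x := by
      simp only [hζ']
      rw [← Finset.sum_div, ← Finset.mul_sum, hsb, mul_div_assoc,
        div_self hmpos.ne', mul_one]
    rw [Finset.sum_add_distrib, hz]
    simp only [ha]
    ring

end WassersteinPaper
end
end

section
/- (Theorem 3.3) Let t ≥ 0, let μ be a probability measure on X, let f be a positive measure on X with |f|_X ≥ 1, and let s^{(t)} be the complementary cost utility, s^{(t)}_{x,y} = t − |x−y| for (x,y) ∈ N_t. Suppose η maximizes ∑_{(x,y)∈N_t} s^{(t)}_{x,y} η_{x,y} over all η : X×X → [0,∞) supported in N_t with ∑_{y∈B_t(x)} η_{x,y} ≤ μ_x for all x and ∑_{x∈B_t(y)} η_{x,y} ≤ f_y for all y, and that |η| = 1. Then its second marginal ζ, defined by ζ_y = ∑_{x∈B_t(y)} η_{x,y}, satisfies ζ ∈ K_f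 and W_1(μ,ζ) ≤ W_1(μ,ρ) for all ρ ∈ K_f; that is, ζ is a projection of μ on K_f with respect to W_1. -/
open scoped BigOperators

noncomputable section

namespace WassersteinPaper

variable {n : ℕ} (X : Finset (Pt n))

/-- Theorem 3.3: if `η` maximizes the MNF objective with the complementary
cost utility among nonnegative functions supported in `N_t` whose marginals are dominated
by `μ` and `f`, and `|η| = 1`, then the second marginal `ζ` of `η` is a projection of `μ`
on `K_f` with respect to `W_1`. -/
theorem stmt_13 (hX : X.Nonempty) (t : ℝ) (ht : 0 ≤ t) (μ : X → ℝ)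
    (hμ : IsProbMeasure X μ) (f : X → ℝ)
    (hf : IsPositiveMeasure X f) (hf1 : 1 ≤ mass1 X f)
    (η : X → X → ℝ) (hη : IsMNFMaximizer X t μ f (complUtility X t) η)
    (hmass : mass2 X η = 1)
    (ζ : X → ℝ) (hζ : ∀ y : X, ζ y = ∑ x ∈ ball X t y, η x y) :
    memKf X f ζ ∧ ∀ ρ : X → ℝ, memKf X f ρ → W1 X μ ζ ≤ W1 X μ ρ := by
  obtain ⟨⟨hηpos, hηsupp, hηcol, hηrow⟩, hmax⟩ := hη
  obtain ⟨hμpos, hμ1⟩ := hμ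
  -- ζ is the full second marginal of η
  have hζ' : ∀ y, ζ y = ∑ x, η x y := by
    intro y
    rw [hζ, ball, Finset.sum_filter]
    refine Finset.sum_congr rfl fun x _ => ?_
    split_ifs with h
    · rfl
    · exact (hηsupp x y (by rw [dist_comm]; exact lt_of_not_ge h)).symm
  have hζpos : ∀ y, 0 ≤ ζ y := fun y => by
    rw [hζ' y]; exact Finset.sum_nonneg fun x _ => hηpos x y
  have hζmass : mass1 X ζ = 1 := by
    unfold mass1
    simp_rw [hζ']
    rw [Finset.sum_comm]
    exact hmass
  have hζle : ∀ y, ζ y ≤ f y := fun y => by rw [hζ' y]; exact hηcol y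
  -- the first marginal of η equals μ
  have hrow : ∀ x, ∑ y, η x y = μ x := by
    have h0 : ∑ x, (μ x - ∑ y, η x y) = 0 := by
      rw [Finset.sum_sub_distrib]
      have : ∑ x, μ x = 1 := hμ1
      rw [this]
      have : ∑ x, ∑ y, η x y = 1 := hmass
      rw [this, sub_self]
    intro x
    have := (Finset.sum_eq_zero_iff_of_nonneg
      (fun x _ => sub_nonneg.mpr (hηrow x))).mp h0 x (Finset.mem_univ x)
    linarith
  -- cost functional
  set C : (X → X → ℝ) → ℝ :=
    fun π => ∑ x : X, ∑ y : X, dist (x : Pt n) (y : Pt n) * π x y with hC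
  have hbdd : BddBelow {c | ∃ π, IsPlan X μ ζ π ∧ c = C π} := by
    refine ⟨0, ?_⟩
    rintro c ⟨π, hπ, rfl⟩
    exact Finset.sum_nonneg fun x _ => Finset.sum_nonneg fun y _ =>
      mul_nonneg dist_nonneg (hπ.1 x y)
  have hplanη : IsPlan X μ ζ η :=
    ⟨hηpos, fun y => (hζ' y).symm, hrow⟩
  have h1 : W1 X μ ζ ≤ C η := csInf_le hbdd ⟨η, hplanη, rfl⟩
  -- objective of any flow with total mass m: obj = t*m - cost
  have hobj : ∀ π : X → X → ℝ,
      MNFobj X (complUtility X t) π = t * mass2 X π - C π := by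
    intro π
    unfold MNFobj complUtility mass2
    rw [hC, Finset.mul_sum, ← Finset.sum_sub_distrib]
    refine Finset.sum_congr rfl fun x _ => ?_
    rw [Finset.mul_sum, ← Finset.sum_sub_distrib]
    refine Finset.sum_congr rfl fun y _ => ?_
    ring
  refine ⟨⟨⟨hζpos, hζmass⟩, hζle⟩, ?_⟩
  rintro ρ ⟨⟨hρpos, hρ1⟩, hρle⟩
  -- the product plan between μ and ρ
  have hprod : IsPlan X μ ρ (fun x y => μ x * ρ y) := by
    refine ⟨fun x y => mul_nonneg (hμpos x) (hρpos y), fun y => ?_, fun x => ?_⟩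
    · rw [← Finset.sum_mul]
      have : ∑ x, μ x = 1 := hμ1
      rw [this, one_mul]
    · rw [← Finset.mul_sum]
      have : ∑ y, ρ y = 1 := hρ1
      rw [this, mul_one]
  refine le_csInf ⟨C (fun x y => μ x * ρ y), (fun x y => μ x * ρ y), hprod, rfl⟩ ?_
  rintro c ⟨π, hπ, rfl⟩
  -- truncate π to get a nearby flow
  set η' : X → X → ℝ :=
    fun x y => if dist (x : Pt n) (y : Pt n) ≤ t then π x y else 0 with hη'
  have hNF : IsNearbyFlow X t μ f η' := by
    refine ⟨fun x y => ?_, fun x y h => ?_, fun y => ?_, fun x => ?_⟩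
    · rw [hη']; dsimp only; split_ifs; exacts [hπ.1 x y, le_refl 0]
    · rw [hη']; dsimp only; rw [if_neg (not_le.mpr h)]
    · calc ∑ x, η' x y ≤ ∑ x, π x y := by
            refine Finset.sum_le_sum fun x _ => ?_
            rw [hη']; dsimp only; split_ifs; exacts [le_refl _, hπ.1 x y]
        _ = ρ y := hπ.2.1 y
        _ ≤ f y := hρle y
    · calc ∑ y, η' x y ≤ ∑ y, π x y := by
            refine Finset.sum_le_sum fun y _ => ?_
            rw [hη']; dsimp only; split_ifs; exacts [le_refl _, hπ.1 x y]
        _ = μ x := hπ.2.2 x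
  have hπmass : mass2 X π = 1 := by
    unfold mass2
    rw [Finset.sum_congr rfl fun x _ => hπ.2.2 x]
    exact hμ1
  -- objective of η' dominates t - C π
  have hobj' : t - C π ≤ MNFobj X (complUtility X t) η' := by
    have key : MNFobj X (complUtility X t) π ≤ MNFobj X (complUtility X t) η' := by
      unfold MNFobj complUtility
      refine Finset.sum_le_sum fun x _ => Finset.sum_le_sum fun y _ => ?_
      rw [hη']; dsimp only
      split_ifs with h
      · exact le_refl _
      · rw [mul_zero]
        exact mul_nonpos_of_nonpos_of_nonneg
          (sub_nonpos.mpr (le_of_not_ge h)) (hπ.1 x y)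
    have := hobj π
    rw [hπmass, mul_one] at this
    linarith
  have hmaxle := hmax η' hNF
  have hCη : C η = t - MNFobj X (complUtility X t) η := by
    have := hobj η
    rw [hmass, mul_one] at this
    linarith
  calc W1 X μ ζ ≤ C η := h1
    _ = t - MNFobj X (complUtility X t) η := hCη
    _ ≤ t - MNFobj X (complUtility X t) η' := by linarith
    _ ≤ C π := by linarith

end WassersteinPaper
end
end

section
/- (Corollary 3.4, first part) Let μ be a probability measure on X and let f be a positive measure on X with |f|_X ≥ 1. Let τ_s(μ,f) be the minimal saturation threshold between μ and f with respect to the constant utility s^{(t)}_{x,y} = 1. Then τ_s(μ,f) = min_{ν ∈ K_f} W_∞(μ,ν). -/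
open scoped BigOperators

noncomputable section

namespace WassersteinPaper

variable {n : ℕ} (X : Finset (Pt n))

/-! ### Auxiliary lemmas for Statement 15 -/

lemma tinf_nonneg (π : X → X → ℝ) : 0 ≤ Tinf X π := by
  exact Real.sSup_nonneg (by rintro r ⟨x, y, -, rfl⟩; exact dist_nonneg)

lemma dist_le_tinf (π : X → X → ℝ) {x y : X} (h : 0 < π x y) :
    dist (x : Pt n) (y : Pt n) ≤ Tinf X π := by
  have hb : BddAbove {r | ∃ x y : X, 0 < π x y ∧ r = dist (x : Pt n) (y : Pt n)} := by
    apply Set.Finite.bddAbove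
    apply Set.Finite.subset (Set.finite_range fun p : X × X => dist (p.1 : Pt n) (p.2 : Pt n))
    rintro r ⟨x, y, -, rfl⟩
    exact ⟨(x, y), rfl⟩
  exact le_csSup hb ⟨x, y, h, rfl⟩

lemma mnfobj_const (t : ℝ) (η : X → X → ℝ) :
    MNFobj X (constUtility X t) η = mass2 X η := by
  simp [MNFobj, constUtility, mass2]

lemma prod_plan {μ ν : X → ℝ} (hμ : IsProbMeasure X μ) (hν : IsProbMeasure X ν) :
    IsPlan X μ ν (fun x y => μ x * ν y) := by
  refine ⟨fun x y => mul_nonneg (hμ.1 x) (hν.1 y), fun y => ?_, fun x => ?_⟩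
  · rw [← Finset.sum_mul, show (∑ x, μ x) = 1 from hμ.2, one_mul]
  · rw [← Finset.mul_sum, show (∑ y, ν y) = 1 from hν.2, mul_one]

/-- Any transportation plan from `μ` to some `ν ≤ f` witnesses `Tinf π` in the saturation set. -/
lemma tinf_mem_saturation {μ f ν : X → ℝ} (hμ : IsProbMeasure X μ)
    (hνf : ∀ x, ν x ≤ f x) {π : X → X → ℝ} (hπ : IsPlan X μ ν π) :
    Tinf X π ∈ saturationSet X μ f (constUtility X) := by
  obtain ⟨hπ0, hcol, hrow⟩ := hπ
  have hmass : mass2 X π = 1 := by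
    have : ∀ x : X, ∑ y, π x y = μ x := hrow
    simp only [mass2]
    rw [Finset.sum_congr rfl fun x _ => hrow x]
    exact hμ.2
  refine ⟨tinf_nonneg X π, π, ⟨⟨hπ0, ?_, ?_, ?_⟩, ?_⟩, hmass⟩
  · intro x y hd
    by_contra h
    have hpos : 0 < π x y := (hπ0 x y).lt_of_ne (Ne.symm h)
    exact absurd (dist_le_tinf X π hpos) (not_le.mpr hd)
  · intro y; rw [hcol y]; exact hνf y
  · intro x; rw [hrow x]
  · intro η' hη'
    rw [mnfobj_const, mnfobj_const, hmass]
    calc mass2 X η' ≤ ∑ x, μ x := Finset.sum_le_sum fun x _ => hη'.2.2.2 x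
      _ = 1 := hμ.2

/-- Corollary 3.4, first part: the minimal saturation threshold between `μ`
and `f`, with respect to the constant utility, equals `min_{ν ∈ K_f} W_∞(μ,ν)`. -/
theorem stmt_15 (hX : X.Nonempty) (μ : X → ℝ) (hμ : IsProbMeasure X μ)
    (f : X → ℝ) (hf : IsPositiveMeasure X f) (hf1 : 1 ≤ mass1 X f) :
    tau X μ f (constUtility X) =
      sInf {w | ∃ ν : X → ℝ, memKf X f ν ∧ w = Winf X μ ν} := by
  -- the distinguished element `ρ = f / |f|` of `K_f`
  have hM0 : (0 : ℝ) < mass1 X f := lt_of_lt_of_le one_pos hf1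
  set ρ : X → ℝ := fun x => f x / mass1 X f with hρdef
  have hρprob : IsProbMeasure X ρ := by
    constructor
    · intro x; exact div_nonneg (hf x) hM0.le
    · simp only [mass1, hρdef]
      rw [← Finset.sum_div]
      exact div_self hM0.ne'
  have hρKf : memKf X f ρ := ⟨hρprob, fun x => div_le_self (hf x) hf1⟩
  -- lower bounds
  have hsatBdd : BddBelow (saturationSet X μ f (constUtility X)) := ⟨0, fun t ht => ht.1⟩
  have hplanBdd : ∀ ν : X → ℝ, BddBelow {r | ∃ π, IsPlan X μ ν π ∧ r = Tinf X π} := by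
    intro ν
    exact ⟨0, by rintro r ⟨π, -, rfl⟩; exact tinf_nonneg X π⟩
  have hplanNe : ∀ ν : X → ℝ, IsProbMeasure X ν →
      (fun x y => μ x * ν y) ∈ {π | IsPlan X μ ν π} := fun ν hν => prod_plan X hμ hν
  -- nonemptiness of the saturation set
  have hsatNe : (saturationSet X μ f (constUtility X)).Nonempty :=
    ⟨_, tinf_mem_saturation X hμ hρKf.2 (prod_plan X hμ hρprob)⟩
  have hS2Ne : {w | ∃ ν : X → ℝ, memKf X f ν ∧ w = Winf X μ ν}.Nonempty :=
    ⟨Winf X μ ρ, ρ, hρKf, rfl⟩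
  apply le_antisymm
  · -- τ ≤ inf of W∞
    apply le_csInf hS2Ne
    rintro w ⟨ν, hν, rfl⟩
    rw [Winf]
    refine le_csInf ⟨Tinf X (fun x y => μ x * ν y), ⟨_, hplanNe ν hν.1, rfl⟩⟩ ?_
    rintro r ⟨π, hπ, rfl⟩
    exact csInf_le hsatBdd (tinf_mem_saturation X hμ hν.2 hπ)
  · -- inf of W∞ ≤ τ
    apply le_csInf hsatNe
    rintro t ⟨ht0, η, ⟨⟨hη0, hηz, hηf, hημ⟩, -⟩, hmass⟩
    -- construct the target measure ν from the flow η
    set ν : X → ℝ := fun y => ∑ x, η x y with hνdef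
    have hνprob : IsProbMeasure X ν := by
      constructor
      · intro y; exact Finset.sum_nonneg fun x _ => hη0 x y
      · simp only [mass1, hνdef]
        rw [Finset.sum_comm]
        exact hmass
    have hνKf : memKf X f ν := ⟨hνprob, fun y => hηf y⟩
    -- the rows of η sum exactly to μ
    have hrow : ∀ x : X, ∑ y, η x y = μ x := by
      have hsum : (∑ x : X, ∑ y, η x y) = ∑ x : X, μ x := by
        rw [show (∑ x : X, ∑ y, η x y) = mass2 X η from rfl, hmass, hμ.2.symm]; rfl
      intro x
      exact (Finset.sum_eq_sum_iff_of_le fun i _ => hημ i).mp hsum x (Finset.mem_univ x)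
    have hplan : IsPlan X μ ν η := ⟨hη0, fun y => rfl, hrow⟩
    have htinf : Tinf X η ≤ t := by
      refine Real.sSup_le ?_ ht0
      rintro r ⟨x, y, hpos, rfl⟩
      by_contra h
      exact absurd (hηz x y (not_le.mp h)) (ne_of_gt hpos)
    calc sInf {w | ∃ ν : X → ℝ, memKf X f ν ∧ w = Winf X μ ν}
        ≤ Winf X μ ν := csInf_le ⟨0, by
            rintro w ⟨ν', -, rfl⟩
            exact Real.sInf_nonneg (by rintro r ⟨π, -, rfl⟩; exact tinf_nonneg X π)⟩
          ⟨ν, hνKf, rfl⟩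
      _ ≤ Tinf X η := csInf_le (hplanBdd ν) ⟨η, hplan, rfl⟩
      _ ≤ t := htinf

end WassersteinPaper
end
end

section
/- (Corollary 3.4, second part) Let μ be a probability measure on X, let f be a positive measure on X with |f|_X ≥ 1, and let T = τ_s(μ,f) be the minimal saturation threshold between μ and f with respect to the constant utility s^{(t)}_{x,y} = 1. Suppose η maximizes ∑_{(x,y)∈N_T} η_{x,y} over all η : X×X → [0,∞) supported in N_T with ∑_{y∈B_T(x)} η_{x,y} ≤ μ_x for all x and ∑_{x∈B_T(y)} η_{x,y} ≤ f_y for all y. Then ζ, defined by ζ_y = ∑_{x∈B_T(y)} η_{x,y}, satisfies ζ ∈ K_f and W_∞(μ,ζ) ≤ W_∞(μ,ρ) for all ρ ∈ K_f; that is, ζ is a projection of μ on K_f with respect to W_∞. -/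
open scoped BigOperators

noncomputable section

namespace WassersteinPaper

variable {n : ℕ} (X : Finset (Pt n))

lemma flow_mass_le {t : ℝ} {μ f : X → ℝ} {η : X → X → ℝ}
    (h : IsNearbyFlow X t μ f η) : mass2 X η ≤ mass1 X μ :=
  Finset.sum_le_sum fun x _ => h.2.2.2 x

lemma isMax_of_mass_one {t : ℝ} {μ f : X → ℝ} (hμ : mass1 X μ = 1) {η : X → X → ℝ}
    (h : IsNearbyFlow X t μ f η) (h1 : mass2 X η = 1) :
    IsMNFMaximizer X t μ f (constUtility X t) η := by
  refine ⟨h, fun η' h' => ?_⟩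
  rw [mnfobj_const, mnfobj_const, h1]
  exact (flow_mass_le X h').trans_eq hμ

/-- The finite set of pairwise distances (together with `0`). -/
def distSet : Finset ℝ :=
  insert 0 ((Finset.univ : Finset (X × X)).image fun p => dist (p.1 : Pt n) (p.2 : Pt n))

lemma dist_mem_distSet (x y : X) : dist (x : Pt n) (y : Pt n) ∈ distSet X :=
  Finset.mem_insert_of_mem (Finset.mem_image.2 ⟨(x, y), Finset.mem_univ _, rfl⟩)

lemma sat_nonempty (hX : X.Nonempty) {μ f : X → ℝ} (hμ : IsProbMeasure X μ)
    (hf : IsPositiveMeasure X f) (hf1 : 1 ≤ mass1 X f) :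
    (saturationSet X μ f (constUtility X)).Nonempty := by
  have hD : (distSet X).Nonempty := ⟨0, Finset.mem_insert_self _ _⟩
  set t0 := (distSet X).max' hD with ht0
  have hle : ∀ x y : X, dist (x : Pt n) (y : Pt n) ≤ t0 :=
    fun x y => Finset.le_max' _ _ (dist_mem_distSet X x y)
  have ht00 : (0:ℝ) ≤ t0 := Finset.le_max' _ _ (Finset.mem_insert_self _ _)
  have hM : (0:ℝ) < mass1 X f := lt_of_lt_of_le one_pos hf1
  set η0 : X → X → ℝ := fun x y => μ x * f y / mass1 X f with hη0
  have hmarg : ∀ x, ∑ y, η0 x y = μ x := by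
    intro x
    rw [hη0]
    simp only
    rw [← Finset.sum_div, ← Finset.mul_sum, show ∑ y, f y = mass1 X f from rfl]
    field_simp
  have hflow : IsNearbyFlow X t0 μ f η0 := by
    refine ⟨fun x y => div_nonneg (mul_nonneg (hμ.1 x) (hf y)) hM.le, ?_, ?_, ?_⟩
    · intro x y hxy; exact absurd (hle x y) (not_le.2 hxy)
    · intro y
      have h2 : ∑ x, η0 x y = f y / mass1 X f := by
        rw [hη0]
        simp only
        rw [← Finset.sum_div, ← Finset.sum_mul, show ∑ x, μ x = mass1 X μ from rfl, hμ.2,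
          one_mul]
      rw [h2]
      exact div_le_self (hf y) hf1
    · intro x; exact le_of_eq (hmarg x)
  have hm : mass2 X η0 = 1 := by
    rw [mass2]
    calc ∑ x, ∑ y, η0 x y = ∑ x, μ x := Finset.sum_congr rfl fun x _ => hmarg x
    _ = 1 := hμ.2
  exact ⟨t0, ht00, η0, isMax_of_mass_one X hμ.2 hflow hm, hm⟩

lemma nearbyFlow_congr {t d : ℝ}
    (h : ∀ x y : X, dist (x : Pt n) (y : Pt n) ≤ t → dist (x : Pt n) (y : Pt n) ≤ d)
    (hdt : d ≤ t) (μ f : X → ℝ) (η : X → X → ℝ) :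
    IsNearbyFlow X t μ f η ↔ IsNearbyFlow X d μ f η := by
  unfold IsNearbyFlow
  constructor
  · rintro ⟨a, b, c, e⟩
    refine ⟨a, fun x y hd => b x y ?_, c, e⟩
    by_contra ht'
    exact absurd (h x y (not_lt.1 ht')) (not_le.2 hd)
  · rintro ⟨a, b, c, e⟩
    exact ⟨a, fun x y ht' => b x y (lt_of_le_of_lt hdt ht'), c, e⟩

lemma sat_quantize {μ f : X → ℝ} {t : ℝ} (ht : t ∈ saturationSet X μ f (constUtility X)) :
    ∃ d ∈ distSet X, d ≤ t ∧ d ∈ saturationSet X μ f (constUtility X) := by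
  classical
  obtain ⟨ht0, ηt, hηt, hm⟩ := ht
  set S := (distSet X).filter (· ≤ t) with hS
  have h0S : (0:ℝ) ∈ S := Finset.mem_filter.2 ⟨Finset.mem_insert_self 0 _, ht0⟩
  have hSne : S.Nonempty := ⟨0, h0S⟩
  set d := S.max' hSne with hd
  have hdS : d ∈ S := S.max'_mem hSne
  have hdD : d ∈ distSet X := (Finset.mem_filter.1 hdS).1
  have hdt : d ≤ t := (Finset.mem_filter.1 hdS).2
  have hd0 : (0:ℝ) ≤ d := Finset.le_max' S 0 h0S
  have hcong : ∀ x y : X, dist (x : Pt n) (y : Pt n) ≤ t → dist (x : Pt n) (y : Pt n) ≤ d :=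
    fun x y hxy =>
      Finset.le_max' S _ (Finset.mem_filter.2 ⟨dist_mem_distSet X x y, hxy⟩)
  have hiff := nearbyFlow_congr X hcong hdt μ f
  refine ⟨d, hdD, hdt, hd0, ηt, ⟨(hiff ηt).1 hηt.1, fun η' h' => ?_⟩, hm⟩
  exact hηt.2 η' ((hiff η').2 h')

lemma tau_mem_sat (hX : X.Nonempty) {μ f : X → ℝ} (hμ : IsProbMeasure X μ)
    (hf : IsPositiveMeasure X f) (hf1 : 1 ≤ mass1 X f) :
    tau X μ f (constUtility X) ∈ saturationSet X μ f (constUtility X) := by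
  classical
  obtain ⟨t1, ht1⟩ := sat_nonempty X hX hμ hf hf1
  set S := (distSet X).filter (fun d => d ∈ saturationSet X μ f (constUtility X)) with hS
  have hSne : S.Nonempty := by
    obtain ⟨d, hdD, _, hdsat⟩ := sat_quantize X ht1
    exact ⟨d, Finset.mem_filter.2 ⟨hdD, hdsat⟩⟩
  set m := S.min' hSne with hm
  have hmsat : m ∈ saturationSet X μ f (constUtility X) :=
    (Finset.mem_filter.1 (S.min'_mem hSne)).2
  have hlb : ∀ t ∈ saturationSet X μ f (constUtility X), m ≤ t := by
    intro t ht
    obtain ⟨d, hdD, hdt, hdsat⟩ := sat_quantize X ht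
    exact le_trans (Finset.min'_le _ _ (Finset.mem_filter.2 ⟨hdD, hdsat⟩)) hdt
  have heq : tau X μ f (constUtility X) = m := by
    refine le_antisymm (csInf_le ⟨m, hlb⟩ hmsat) (le_csInf ⟨t1, ht1⟩ hlb)
  rw [heq]; exact hmsat

/-- Corollary 3.4, second part: if `T` is the minimal saturation threshold
between `μ` and `f` with respect to the constant utility and `η` is a maximizer of the
corresponding MNF problem at threshold `T`, then the second marginal `ζ` of `η` is a
projection of `μ` on `K_f` with respect to `W_∞`. -/
theorem stmt_16 (hX : X.Nonempty) (μ : X → ℝ) (hμ : IsProbMeasure X μ)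
    (f : X → ℝ) (hf : IsPositiveMeasure X f) (hf1 : 1 ≤ mass1 X f)
    (T : ℝ) (hT : T = tau X μ f (constUtility X))
    (η : X → X → ℝ) (hη : IsMNFMaximizer X T μ f (constUtility X T) η)
    (ζ : X → ℝ) (hζ : ∀ y : X, ζ y = ∑ x ∈ ball X T y, η x y) :
    memKf X f ζ ∧ ∀ ρ : X → ℝ, memKf X f ρ → Winf X μ ζ ≤ Winf X μ ρ := by
  classical
  have hTsat : T ∈ saturationSet X μ f (constUtility X) := by
    rw [hT]; exact tau_mem_sat X hX hμ hf hf1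
  obtain ⟨hT0, η1, hη1, hη1m⟩ := hTsat
  have hmass : mass2 X η = 1 := by
    have h1 : MNFobj X (constUtility X T) η1 ≤ MNFobj X (constUtility X T) η := hη.2 η1 hη1.1
    have h2 : MNFobj X (constUtility X T) η ≤ MNFobj X (constUtility X T) η1 := hη1.2 η hη.1
    have heq := le_antisymm h1 h2
    rw [mnfobj_const, mnfobj_const] at heq
    rw [← heq]; exact hη1m
  have hζ' : ∀ y : X, ζ y = ∑ x, η x y := by
    intro y
    rw [hζ y, ball]
    refine Finset.sum_subset (Finset.filter_subset _ _) ?_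
    intro x _ hx
    refine hη.1.2.1 x y ?_
    rw [Finset.mem_filter] at hx
    push_neg at hx
    have h3 := hx (Finset.mem_univ x)
    rw [dist_comm] at h3
    exact h3
  have hζmass : mass1 X ζ = 1 := by
    rw [mass1]
    calc ∑ y, ζ y = ∑ y, ∑ x, η x y := Finset.sum_congr rfl fun y _ => hζ' y
    _ = ∑ x, ∑ y, η x y := Finset.sum_comm
    _ = 1 := hmass
  have hζKf : memKf X f ζ := by
    refine ⟨⟨fun y => ?_, hζmass⟩, fun y => ?_⟩
    · rw [hζ' y]; exact Finset.sum_nonneg fun x _ => hη.1.1 x y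
    · rw [hζ' y]; exact hη.1.2.2.1 y
  have hmarg : ∀ x, ∑ y, η x y = μ x := by
    have hle : ∀ x ∈ Finset.univ, ∑ y, η x y ≤ μ x := fun x _ => hη.1.2.2.2 x
    have hsum : ∑ x, ∑ y, η x y = ∑ x, μ x := by
      rw [show ∑ x, ∑ y, η x y = mass2 X η from rfl, hmass,
        show ∑ x, μ x = mass1 X μ from rfl, hμ.2]
    intro x
    exact (Finset.sum_eq_sum_iff_of_le hle).1 hsum x (Finset.mem_univ x)
  have hplan : IsPlan X μ ζ η := ⟨hη.1.1, fun y => (hζ' y).symm, hmarg⟩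
  have hTinf : Tinf X η ≤ T := by
    refine Real.sSup_le ?_ hT0
    rintro r ⟨x, y, hpos, rfl⟩
    by_contra hr
    exact absurd (hη.1.2.1 x y (not_le.1 hr)) (ne_of_gt hpos)
  have hWle : Winf X μ ζ ≤ T := by
    have h0 : ∀ r ∈ {r | ∃ π, IsPlan X μ ζ π ∧ r = Tinf X π}, (0:ℝ) ≤ r := by
      rintro r ⟨π, hπ, rfl⟩
      exact Real.sSup_nonneg (by rintro r ⟨x, y, _, rfl⟩; exact dist_nonneg)
    refine le_trans ?_ hTinf
    exact csInf_le ⟨0, h0⟩ ⟨η, hplan, rfl⟩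
  refine ⟨hζKf, fun ρ hρ => ?_⟩
  have hsatlb : ∀ r ∈ {r | ∃ π, IsPlan X μ ρ π ∧ r = Tinf X π}, T ≤ r := by
    rintro r ⟨π, hπ, rfl⟩
    have hbdd : BddAbove {r | ∃ x y : X, 0 < π x y ∧ r = dist (x : Pt n) (y : Pt n)} := by
      refine Set.Finite.bddAbove (Set.Finite.subset (distSet X).finite_toSet ?_)
      rintro r ⟨x, y, _, rfl⟩
      exact dist_mem_distSet X x y
    have hπ0 : 0 ≤ Tinf X π :=
      Real.sSup_nonneg (by rintro r ⟨x, y, _, rfl⟩; exact dist_nonneg)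
    have hvanish : ∀ x y : X, Tinf X π < dist (x : Pt n) (y : Pt n) → π x y = 0 := by
      intro x y hxy
      by_contra h0
      have hpos : 0 < π x y := lt_of_le_of_ne (hπ.1 x y) (Ne.symm h0)
      have h4 : dist (x : Pt n) (y : Pt n) ≤ Tinf X π := le_csSup hbdd ⟨x, y, hpos, rfl⟩
      exact absurd h4 (not_le.2 hxy)
    have hflow : IsNearbyFlow X (Tinf X π) μ f π :=
      ⟨hπ.1, hvanish, fun y => le_trans (le_of_eq (hπ.2.1 y)) (hρ.2 y),
        fun x => le_of_eq (hπ.2.2 x)⟩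
    have hm : mass2 X π = 1 := by
      rw [mass2]
      calc ∑ x, ∑ y, π x y = ∑ x, μ x := Finset.sum_congr rfl fun x _ => hπ.2.2 x
      _ = 1 := hμ.2
    have hmem : Tinf X π ∈ saturationSet X μ f (constUtility X) :=
      ⟨hπ0, π, isMax_of_mass_one X hμ.2 hflow hm, hm⟩
    rw [hT]
    exact csInf_le ⟨0, fun t ht => ht.1⟩ hmem
  have hplan0 : IsPlan X μ ρ (fun x y => μ x * ρ y) := by
    refine ⟨fun x y => mul_nonneg (hμ.1 x) (hρ.1.1 y), ?_, ?_⟩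
    · intro y
      rw [← Finset.sum_mul, show ∑ x, μ x = mass1 X μ from rfl, hμ.2, one_mul]
    · intro x
      rw [← Finset.mul_sum, show ∑ y, ρ y = mass1 X ρ from rfl, hρ.1.2, mul_one]
  calc Winf X μ ζ ≤ T := hWle
  _ ≤ Winf X μ ρ :=
    le_csInf ⟨Tinf X (fun x y => μ x * ρ y), (fun x y => μ x * ρ y), hplan0, rfl⟩ hsatlb

end WassersteinPaper
end
end

section
/- (Non-uniqueness of Wasserstein projections) Let X = {0, 1, 2} ⊂ ℝ, let μ = δ_1 (the probability measure with mass 1 at the point 1), and let f be the positive measure with f_0 = f_1 = f_2 = 1/2. For t ∈ [0,1], let ν_t be the probability measure with (ν_t)_0 = t/2, (ν_t)_1 = 1/2, (ν_t)_2 = (1−t)/2. Then for every p ∈ [1,∞) and every t ∈ [0,1], one has ν_t ∈ K_f, W_p(μ, ν_t) = 2^{−1/p}, and ν_t is a projection of μ on K_f with respect to W_p, i.e. W_p(μ,ν_t) ≤ W_p(μ,ρ) for all ρ ∈ K_f. In particular, projections with respect to W_p are not unique. -/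
open scoped BigOperators

noncomputable section

namespace WassersteinPaper17

variable (X : Finset ℝ)

/-- Total mass of a (discrete) measure on `X ⊂ ℝ`. -/
def mass1 (μ : X → ℝ) : ℝ := ∑ x, μ x

/-- `μ` is a positive measure on `X`. -/
def IsPositiveMeasure (μ : X → ℝ) : Prop := ∀ x, 0 ≤ μ x

/-- `μ` is a probability measure on `X`. -/
def IsProbMeasure (μ : X → ℝ) : Prop := IsPositiveMeasure X μ ∧ mass1 X μ = 1

/-- `π` is a transportation plan between `μ` and `ν`. -/
def IsPlan (μ ν : X → ℝ) (π : X → X → ℝ) : Prop :=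
  (∀ x y, 0 ≤ π x y) ∧ (∀ y, ∑ x, π x y = ν y) ∧ (∀ x, ∑ y, π x y = μ x)

/-- The `p`-Wasserstein distance `W_p(μ,ν)` on `X ⊂ ℝ`. -/
def Wp (p : ℝ) (μ ν : X → ℝ) : ℝ :=
  (sInf {c | ∃ π, IsPlan X μ ν π ∧
    c = ∑ x : X, ∑ y : X, |(x : ℝ) - (y : ℝ)| ^ p * π x y}) ^ (1 / p)

/-- `ρ ∈ K_f`: `ρ` is a probability measure dominated by `f`. -/
def memKf (f ρ : X → ℝ) : Prop := IsProbMeasure X ρ ∧ ∀ x, ρ x ≤ f x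

/-- The set `X = {0, 1, 2} ⊂ ℝ`. -/
def X17 : Finset ℝ := {0, 1, 2}

/-- `μ = δ₁`. -/
def mu17 : X17 → ℝ := fun x => if (x : ℝ) = 1 then 1 else 0

/-- `f = (δ₀ + δ₁ + δ₂)/2`. -/
def f17 : X17 → ℝ := fun _ => 1 / 2

/-- `ν_t = (t δ₀ + δ₁ + (1-t) δ₂)/2`. -/
def nu17 (t : ℝ) : X17 → ℝ := fun x =>
  if (x : ℝ) = 0 then t / 2 else if (x : ℝ) = 1 then 1 / 2 else (1 - t) / 2

-- AUX
lemma hm0 : (0:ℝ) ∈ X17 := by norm_num [X17]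
lemma hm1 : (1:ℝ) ∈ X17 := by norm_num [X17]
lemma hm2 : (2:ℝ) ∈ X17 := by norm_num [X17]

def E0 : X17 := ⟨0, hm0⟩
def E1 : X17 := ⟨1, hm1⟩
def E2 : X17 := ⟨2, hm2⟩

lemma univ_eq : (Finset.univ : Finset X17) = {E0, E1, E2} := by
  ext x
  obtain ⟨v, hv⟩ := x
  have hv' : v = 0 ∨ v = 1 ∨ v = 2 := by simpa [X17] using hv
  simp only [Finset.mem_univ, true_iff, Finset.mem_insert, Finset.mem_singleton,
    E0, E1, E2, Subtype.mk.injEq]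
  tauto

lemma sum3 (g : X17 → ℝ) : ∑ x, g x = g E0 + g E1 + g E2 := by
  have h1 : E0 ∉ ({E1, E2} : Finset X17) := by
    simp only [Finset.mem_insert, Finset.mem_singleton, E0, E1, E2, Subtype.mk.injEq]
    norm_num
  have h2 : E1 ∉ ({E2} : Finset X17) := by
    simp only [Finset.mem_singleton, E1, E2, Subtype.mk.injEq]; norm_num
  rw [univ_eq, Finset.sum_insert h1, Finset.sum_insert h2, Finset.sum_singleton]
  ring

lemma mu_E0 : mu17 E0 = 0 := by norm_num [mu17, E0]
lemma mu_E1 : mu17 E1 = 1 := by norm_num [mu17, E1]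
lemma mu_E2 : mu17 E2 = 0 := by norm_num [mu17, E2]

lemma mu_prob : IsProbMeasure X17 mu17 := by
  constructor
  · intro x; dsimp [mu17]; split_ifs <;> norm_num
  · rw [mass1, sum3, mu_E0, mu_E1, mu_E2]; norm_num

lemma cost_eq (p : ℝ) (hp : 1 ≤ p) (ν : X17 → ℝ) (hν : IsProbMeasure X17 ν)
    (π : X17 → X17 → ℝ) (hπ : IsPlan X17 mu17 ν π) :
    ∑ x : X17, ∑ y : X17, |(x : ℝ) - (y : ℝ)| ^ p * π x y = 1 - ν E1 := by
  obtain ⟨hpos, hcol, hrow⟩ := hπ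
  have hp0 : p ≠ 0 := by positivity
  have hmass : ν E0 + ν E1 + ν E2 = 1 := by
    have := hν.2; rwa [mass1, sum3] at this
  have hr0 : ∀ y, π E0 y = 0 := by
    have h : ∑ y, π E0 y = 0 := by rw [hrow]; exact mu_E0
    intro y
    exact (Finset.sum_eq_zero_iff_of_nonneg (fun y _ => hpos E0 y)).mp h y (Finset.mem_univ y)
  have hr2 : ∀ y, π E2 y = 0 := by
    have h : ∑ y, π E2 y = 0 := by rw [hrow]; exact mu_E2
    intro y
    exact (Finset.sum_eq_zero_iff_of_nonneg (fun y _ => hpos E2 y)).mp h y (Finset.mem_univ y)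
  have hc0 : π E1 E0 = ν E0 := by
    have := hcol E0; rw [sum3] at this; rw [hr0, hr2] at this; linarith
  have hc2 : π E1 E2 = ν E2 := by
    have := hcol E2; rw [sum3] at this; rw [hr0, hr2] at this; linarith
  rw [sum3 (fun x => ∑ y : X17, |(x : ℝ) - (y : ℝ)| ^ p * π x y)]
  simp only [sum3, hr0, hr2, hc0, hc2]
  have c0 : ((E0 : X17) : ℝ) = 0 := rfl
  have c1 : ((E1 : X17) : ℝ) = 1 := rfl
  have c2 : ((E2 : X17) : ℝ) = 2 := rfl
  rw [c0, c1, c2]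
  norm_num [Real.zero_rpow hp0, Real.one_rpow]
  linarith

lemma wp_eq (p : ℝ) (hp : 1 ≤ p) (ν : X17 → ℝ) (hν : IsProbMeasure X17 ν) :
    Wp X17 p mu17 ν = (1 - ν E1) ^ (1 / p) := by
  have hset : {c | ∃ π, IsPlan X17 mu17 ν π ∧
      c = ∑ x : X17, ∑ y : X17, |(x : ℝ) - (y : ℝ)| ^ p * π x y} = {1 - ν E1} := by
    ext c
    constructor
    · rintro ⟨π, hπ, rfl⟩
      exact cost_eq p hp ν hν π hπ
    · rintro rfl
      refine ⟨fun x y => mu17 x * ν y, ⟨?_, ?_, ?_⟩, ?_⟩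
      · intro x y; exact mul_nonneg (mu_prob.1 x) (hν.1 y)
      · intro y; rw [← Finset.sum_mul]
        have := mu_prob.2; rw [mass1] at this; rw [this, one_mul]
      · intro x; rw [← Finset.mul_sum]
        have := hν.2; rw [mass1] at this; rw [this, mul_one]
      · exact (cost_eq p hp ν hν _ ⟨fun x y => mul_nonneg (mu_prob.1 x) (hν.1 y),
          by intro y; rw [← Finset.sum_mul]
             have := mu_prob.2; rw [mass1] at this; rw [this, one_mul],
          by intro x; rw [← Finset.mul_sum]
             have := hν.2; rw [mass1] at this; rw [this, mul_one]⟩).symm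
  rw [Wp, hset, csInf_singleton]

lemma nu_E0 (t : ℝ) : nu17 t E0 = t / 2 := by norm_num [nu17, E0]
lemma nu_E1 (t : ℝ) : nu17 t E1 = 1 / 2 := by norm_num [nu17, E1]
lemma nu_E2 (t : ℝ) : nu17 t E2 = (1 - t) / 2 := by norm_num [nu17, E2]

lemma nu_memKf (t : ℝ) (ht : t ∈ Set.Icc (0:ℝ) 1) : memKf X17 f17 (nu17 t) := by
  obtain ⟨ht0, ht1⟩ := ht
  refine ⟨⟨?_, ?_⟩, ?_⟩
  · intro x; dsimp [nu17]; split_ifs <;> linarith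
  · rw [mass1, sum3, nu_E0, nu_E1, nu_E2]; ring
  · intro x; dsimp [nu17, f17]; split_ifs <;> linarith

/-- non-uniqueness of Wasserstein projections: for every `p ∈ [1,∞)` and
`t ∈ [0,1]`, the measure `ν_t` lies in `K_f`, satisfies `W_p(μ,ν_t) = 2^{-1/p}`, and is a
projection of `μ = δ₁` on `K_f` with respect to `W_p`; in particular, projections with
respect to `W_p` are not unique. -/
theorem stmt_17 (p : ℝ) (hp : 1 ≤ p) :
    (∀ t ∈ Set.Icc (0 : ℝ) 1,
      memKf X17 f17 (nu17 t) ∧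
      Wp X17 p mu17 (nu17 t) = 2 ^ (-(1 / p)) ∧
      (∀ ρ : X17 → ℝ, memKf X17 f17 ρ → Wp X17 p mu17 (nu17 t) ≤ Wp X17 p mu17 ρ)) ∧
    (∃ ν₁ ν₂ : X17 → ℝ, ν₁ ≠ ν₂ ∧
      (memKf X17 f17 ν₁ ∧ ∀ ρ : X17 → ℝ, memKf X17 f17 ρ → Wp X17 p mu17 ν₁ ≤ Wp X17 p mu17 ρ) ∧
      (memKf X17 f17 ν₂ ∧ ∀ ρ : X17 → ℝ, memKf X17 f17 ρ → Wp X17 p mu17 ν₂ ≤ Wp X17 p mu17 ρ)) := by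
  have hval : ∀ t ∈ Set.Icc (0:ℝ) 1, Wp X17 p mu17 (nu17 t) = 2 ^ (-(1 / p)) := by
    intro t ht
    rw [wp_eq p hp _ (nu_memKf t ht).1, nu_E1]
    rw [show (1:ℝ) - 1/2 = 2⁻¹ by norm_num,
      Real.inv_rpow (by norm_num : (0:ℝ) ≤ 2),
      ← Real.rpow_neg (by norm_num : (0:ℝ) ≤ 2)]
  have hproj : ∀ t ∈ Set.Icc (0:ℝ) 1, ∀ ρ : X17 → ℝ, memKf X17 f17 ρ →
      Wp X17 p mu17 (nu17 t) ≤ Wp X17 p mu17 ρ := by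
    intro t ht ρ hρ
    rw [wp_eq p hp _ (nu_memKf t ht).1, nu_E1, wp_eq p hp _ hρ.1]
    have hle : ρ E1 ≤ 1/2 := hρ.2 E1
    have h1p : (0:ℝ) ≤ 1 / p := by positivity
    exact Real.rpow_le_rpow (by norm_num) (by linarith) h1p
  refine ⟨fun t ht => ⟨nu_memKf t ht, hval t ht, hproj t ht⟩, nu17 0, nu17 1, ?_, ?_, ?_⟩
  · intro h
    have := congrFun h E0
    rw [nu_E0, nu_E0] at this
    norm_num at this
  · exact ⟨nu_memKf 0 (by norm_num), hproj 0 (by norm_num)⟩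
  · exact ⟨nu_memKf 1 (by norm_num), hproj 1 (by norm_num)⟩


end WassersteinPaper17
end
end

section
/- For all probability measures μ, ν on X, the p-Wasserstein distance converges to the infinity Wasserstein distance as p → ∞: lim_{p→∞} W_p(μ,ν) = W_∞(μ,ν). -/
open scoped BigOperators

noncomputable section

namespace WassersteinPaper

variable {n : ℕ} (X : Finset (Pt n))

section Aux

variable {n : ℕ} {X : Finset (Pt n)}

private lemma measure_le_one {μ : X → ℝ} (hμ : IsProbMeasure X μ) (x : X) : μ x ≤ 1 := by
  calc μ x ≤ ∑ z, μ z := Finset.single_le_sum (fun z _ => hμ.1 z) (Finset.mem_univ x)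
  _ = 1 := hμ.2

private lemma exists_plan {μ ν : X → ℝ} (hμ : IsProbMeasure X μ) (hν : IsProbMeasure X ν) :
    ∃ π, IsPlan X μ ν π := by
  refine ⟨fun x y => μ x * ν y, fun x y => mul_nonneg (hμ.1 x) (hν.1 y), fun y => ?_, fun x => ?_⟩
  · rw [← Finset.sum_mul]
    have : (∑ x, μ x) = 1 := hμ.2
    rw [this, one_mul]
  · rw [← Finset.mul_sum]
    have : (∑ y, ν y) = 1 := hν.2
    rw [this, mul_one]

private lemma mass2_of_plan {μ ν : X → ℝ} {π : X → X → ℝ} (hμ : IsProbMeasure X μ)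
    (hπ : IsPlan X μ ν π) : mass2 X π = 1 := by
  unfold mass2
  calc (∑ x, ∑ y, π x y) = ∑ x, μ x := Finset.sum_congr rfl (fun x _ => hπ.2.2 x)
  _ = 1 := hμ.2

private lemma plan_support {μ ν : X → ℝ} {π : X → X → ℝ} (hμ : IsProbMeasure X μ)
    (hπ : IsPlan X μ ν π) : ∃ x y, 0 < π x y := by
  by_contra h
  push_neg at h
  have hz : ∀ x y, π x y = 0 := fun x y => le_antisymm (h x y) (hπ.1 x y)
  have := mass2_of_plan hμ hπ
  simp only [mass2, hz, Finset.sum_const_zero] at this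
  exact zero_ne_one this

/-- The support set of distances of a plan. -/
private def Tset (π : X → X → ℝ) : Set ℝ :=
  {r | ∃ x y : X, 0 < π x y ∧ r = dist (x : Pt n) (y : Pt n)}

private lemma Tset_finite (π : X → X → ℝ) : (Tset (X := X) π).Finite := by
  apply Set.Finite.subset (Set.finite_range (fun q : X × X => dist (q.1 : Pt n) (q.2 : Pt n)))
  rintro r ⟨x, y, _, rfl⟩
  exact ⟨(x, y), rfl⟩

private lemma tinf_mem {μ ν : X → ℝ} {π : X → X → ℝ} (hμ : IsProbMeasure X μ)
    (hπ : IsPlan X μ ν π) : Tinf X π ∈ Tset (X := X) π := by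
  obtain ⟨x, y, hxy⟩ := plan_support hμ hπ
  exact Set.Nonempty.csSup_mem ⟨_, x, y, hxy, rfl⟩ (Tset_finite π)

private lemma le_tinf {π : X → X → ℝ} {x y : X} (h : 0 < π x y) :
    dist (x : Pt n) (y : Pt n) ≤ Tinf X π :=
  le_csSup (Set.Finite.bddAbove (Tset_finite π)) ⟨x, y, h, rfl⟩

private lemma tinf_nonneg_s18 {μ ν : X → ℝ} {π : X → X → ℝ} (hμ : IsProbMeasure X μ)
    (hπ : IsPlan X μ ν π) : 0 ≤ Tinf X π := by
  obtain ⟨x, y, h, hd⟩ := tinf_mem hμ hπ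
  rw [hd]; exact dist_nonneg

private lemma winf_spec {μ ν : X → ℝ} (hμ : IsProbMeasure X μ) (hν : IsProbMeasure X ν) :
    (∃ π, IsPlan X μ ν π ∧ Tinf X π = Winf X μ ν) ∧
      (∀ π, IsPlan X μ ν π → Winf X μ ν ≤ Tinf X π) := by
  set S : Set ℝ := {r | ∃ π, IsPlan X μ ν π ∧ r = Tinf X π} with hS
  have hfin : S.Finite := by
    apply Set.Finite.subset (Set.finite_range (fun q : X × X => dist (q.1 : Pt n) (q.2 : Pt n)))
    rintro r ⟨π, hπ, rfl⟩
    obtain ⟨x, y, _, hd⟩ := tinf_mem hμ hπ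
    exact ⟨(x, y), hd.symm⟩
  obtain ⟨π₀, hπ₀⟩ := exists_plan hμ hν
  have hne : S.Nonempty := ⟨_, π₀, hπ₀, rfl⟩
  constructor
  · obtain ⟨π, hπ, hr⟩ := Set.Nonempty.csInf_mem hne hfin
    exact ⟨π, hπ, hr.symm⟩
  · intro π hπ
    exact csInf_le (Set.Finite.bddBelow hfin) ⟨π, hπ, rfl⟩

private lemma winf_nonneg {μ ν : X → ℝ} (hμ : IsProbMeasure X μ) (hν : IsProbMeasure X ν) :
    0 ≤ Winf X μ ν := by
  obtain ⟨⟨π, hπ, hT⟩, _⟩ := winf_spec hμ hν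
  rw [← hT]; exact tinf_nonneg_s18 hμ hπ

private lemma exists_max_flow (r : ℝ) {μ ν : X → ℝ} (hμ : IsProbMeasure X μ)
    (hν : IsProbMeasure X ν) :
    ∃ η₀, IsNearbyFlow X r μ ν η₀ ∧ ∀ η, IsNearbyFlow X r μ ν η → mass2 X η ≤ mass2 X η₀ := by
  set F : Set (X → X → ℝ) := {η | IsNearbyFlow X r μ ν η} with hF
  have hsub : F ⊆ Set.Icc (fun _ _ => (0 : ℝ)) (fun _ _ => (1 : ℝ)) := by
    rintro η ⟨h0, hvan, hcol, hrow⟩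
    constructor
    · intro x; intro y; exact h0 x y
    · intro x; intro y
      calc η x y ≤ ∑ z, η x z :=
            Finset.single_le_sum (fun z _ => h0 x z) (Finset.mem_univ y)
      _ ≤ μ x := hrow x
      _ ≤ 1 := measure_le_one hμ x
  have hclosed : IsClosed F := by
    have h1 : IsClosed {η : X → X → ℝ | ∀ x y, 0 ≤ η x y} := by
      simp only [Set.setOf_forall]
      exact isClosed_iInter fun x => isClosed_iInter fun y =>
        isClosed_le continuous_const ((continuous_apply y).comp (continuous_apply x))
    have h2 : IsClosed {η : X → X → ℝ |
        ∀ x y : X, r < dist (x : Pt n) (y : Pt n) → η x y = 0} := by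
      simp only [Set.setOf_forall]
      exact isClosed_iInter fun x => isClosed_iInter fun y => isClosed_iInter fun _ =>
        isClosed_eq ((continuous_apply y).comp (continuous_apply x)) continuous_const
    have h3 : IsClosed {η : X → X → ℝ | ∀ y, (∑ x, η x y) ≤ ν y} := by
      simp only [Set.setOf_forall]
      exact isClosed_iInter fun y => isClosed_le
        (continuous_finset_sum _ fun x _ => (continuous_apply y).comp (continuous_apply x))
        continuous_const
    have h4 : IsClosed {η : X → X → ℝ | ∀ x, (∑ y, η x y) ≤ μ x} := by
      simp only [Set.setOf_forall]
      exact isClosed_iInter fun x => isClosed_le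
        (continuous_finset_sum _ fun y _ => (continuous_apply y).comp (continuous_apply x))
        continuous_const
    have : F = {η : X → X → ℝ | ∀ x y, 0 ≤ η x y} ∩
        ({η | ∀ x y : X, r < dist (x : Pt n) (y : Pt n) → η x y = 0} ∩
          ({η | ∀ y, (∑ x, η x y) ≤ ν y} ∩ {η | ∀ x, (∑ y, η x y) ≤ μ x})) := by
      ext η
      simp only [hF, Set.mem_inter_iff, Set.mem_setOf_eq, IsNearbyFlow]
    rw [this]
    exact h1.inter (h2.inter (h3.inter h4))
  have hcomp : IsCompact F :=
    IsCompact.of_isClosed_subset isCompact_Icc hclosed hsub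
  have hne : F.Nonempty := by
    refine ⟨fun _ _ => 0, fun x y => le_rfl, fun x y _ => rfl, fun y => ?_, fun x => ?_⟩
    · simp only [Finset.sum_const_zero]; exact hν.1 y
    · simp only [Finset.sum_const_zero]; exact hμ.1 x
  have hcont : ContinuousOn (mass2 X) F := by
    apply Continuous.continuousOn
    exact continuous_finset_sum _ fun x _ =>
      continuous_finset_sum _ fun y _ => (continuous_apply y).comp (continuous_apply x)
  obtain ⟨η₀, hη₀F, hmax⟩ := hcomp.exists_isMaxOn hne hcont
  exact ⟨η₀, hη₀F, fun η hη => hmax hη⟩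

end Aux

/-- `W_p(μ,ν) → W_∞(μ,ν)` as `p → ∞`. -/
theorem stmt_18 (hX : X.Nonempty) (μ ν : X → ℝ)
    (hμ : IsProbMeasure X μ) (hν : IsProbMeasure X ν) :
    Filter.Tendsto (fun p : ℝ => Wp X p μ ν) Filter.atTop (nhds (Winf X μ ν)) := by
  classical
  set W := Winf X μ ν with hWdef
  obtain ⟨⟨πs, hπs, hTs⟩, hWle⟩ := winf_spec hμ hν
  simp only [← hWdef] at hTs hWle
  have hW0 : 0 ≤ W := winf_nonneg hμ hν
  set C : ℝ → Set ℝ := fun p => {c | ∃ π, IsPlan X μ ν π ∧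
    c = ∑ x : X, ∑ y : X, (dist (x : Pt n) (y : Pt n)) ^ p * π x y} with hC
  have hWpC : ∀ p : ℝ, Wp X p μ ν = (sInf (C p)) ^ (1 / p) := fun p => rfl
  have hCne : ∀ p : ℝ, (C p).Nonempty := fun p => ⟨_, πs, hπs, rfl⟩
  have hCnonneg : ∀ p : ℝ, ∀ c ∈ C p, (0 : ℝ) ≤ c := by
    rintro p c ⟨π, hπ, rfl⟩
    exact Finset.sum_nonneg fun x _ => Finset.sum_nonneg fun y _ =>
      mul_nonneg (Real.rpow_nonneg dist_nonneg _) (hπ.1 x y)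
  have hInf0 : ∀ p : ℝ, 0 ≤ sInf (C p) := fun p => le_csInf (hCne p) (hCnonneg p)
  have hπs1 : (∑ x : X, ∑ y : X, πs x y) = 1 := by
    have := mass2_of_plan hμ hπs; rwa [mass2] at this
  have hupper : ∀ p : ℝ, 1 ≤ p → Wp X p μ ν ≤ W := by
    intro p hp
    have hp0 : (0 : ℝ) < p := lt_of_lt_of_le one_pos hp
    have hcost : (∑ x : X, ∑ y : X, (dist (x : Pt n) (y : Pt n)) ^ p * πs x y) ≤ W ^ p := by
      calc (∑ x : X, ∑ y : X, (dist (x : Pt n) (y : Pt n)) ^ p * πs x y)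
          ≤ ∑ x : X, ∑ y : X, W ^ p * πs x y := by
            refine Finset.sum_le_sum fun x _ => Finset.sum_le_sum fun y _ => ?_
            rcases eq_or_lt_of_le (hπs.1 x y) with h | h
            · rw [← h, mul_zero, mul_zero]
            · refine mul_le_mul_of_nonneg_right ?_ (le_of_lt h)
              exact Real.rpow_le_rpow dist_nonneg (hTs ▸ le_tinf h) (le_of_lt hp0)
        _ = W ^ p * ∑ x : X, ∑ y : X, πs x y := by simp_rw [Finset.mul_sum]
        _ = W ^ p := by rw [hπs1, mul_one]
    have hmem : (∑ x : X, ∑ y : X, (dist (x : Pt n) (y : Pt n)) ^ p * πs x y) ∈ C p :=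
      ⟨πs, hπs, rfl⟩
    have h1 : sInf (C p) ≤ W ^ p :=
      le_trans (csInf_le ⟨0, hCnonneg p⟩ hmem) hcost
    rw [hWpC]
    calc (sInf (C p)) ^ (1 / p) ≤ (W ^ p) ^ (1 / p) :=
          Real.rpow_le_rpow (hInf0 p) h1 (by positivity)
      _ = W := by
          rw [← Real.rpow_mul hW0, mul_one_div_cancel hp0.ne', Real.rpow_one]
  by_cases hWpos : 0 < W
  · -- the distance threshold r
    set Dfin : Finset ℝ :=
      Finset.image (fun q : X × X => dist (q.1 : Pt n) (q.2 : Pt n)) Finset.univ with hDfin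
    set rset : Finset ℝ := insert (0 : ℝ) (Dfin.filter (fun d => d < W)) with hrset
    have hrne : rset.Nonempty := ⟨0, Finset.mem_insert_self _ _⟩
    set r := rset.max' hrne with hrdef
    have hr0 : 0 ≤ r := Finset.le_max' _ 0 (Finset.mem_insert_self _ _)
    have hrW : r < W := by
      rw [hrdef]
      rw [Finset.max'_lt_iff]
      intro b hb
      rcases Finset.mem_insert.mp hb with h | h
      · rw [h]; exact hWpos
      · exact (Finset.mem_filter.mp h).2
    have hrle : ∀ x y : X, dist (x : Pt n) (y : Pt n) < W → dist (x : Pt n) (y : Pt n) ≤ r := by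
      intro x y h
      apply Finset.le_max' rset
      rw [hrset]
      refine Finset.mem_insert_of_mem (Finset.mem_filter.mpr ⟨?_, h⟩)
      rw [hDfin]
      exact Finset.mem_image.mpr ⟨(x, y), Finset.mem_univ _, rfl⟩
    obtain ⟨η₀, hη₀, hmax⟩ := exists_max_flow r hμ hν
    set M := mass2 X η₀ with hMdef
    have hM1 : M < 1 := by
      rcases lt_or_ge M 1 with h | h
      · exact h
      have hMle : M ≤ 1 := by
        rw [hMdef, mass2]
        calc (∑ x : X, ∑ y : X, η₀ x y) ≤ ∑ x : X, μ x :=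
              Finset.sum_le_sum fun x _ => hη₀.2.2.2 x
          _ = 1 := hμ.2
      have hrow : ∀ x, (∑ y, η₀ x y) = μ x := by
        have hsum : (∑ x, (μ x - ∑ y, η₀ x y)) = 0 := by
          rw [Finset.sum_sub_distrib]
          have h1 : (∑ x, μ x) = 1 := hμ.2
          have h2 : (∑ x : X, ∑ y : X, η₀ x y) = M := rfl
          rw [h1, h2]
          linarith
        have h3 := (Finset.sum_eq_zero_iff_of_nonneg
          (fun x _ => sub_nonneg.mpr (hη₀.2.2.2 x))).mp hsum
        intro x
        have := h3 x (Finset.mem_univ x)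
        linarith [sub_eq_zero.mp this]
      have hcol : ∀ y, (∑ x, η₀ x y) = ν y := by
        have hνsum : (∑ y : X, ∑ x : X, η₀ x y) = 1 := by
          rw [Finset.sum_comm]
          have h2 : (∑ x : X, ∑ y : X, η₀ x y) = M := rfl
          rw [h2]; linarith
        have hsum : (∑ y, (ν y - ∑ x, η₀ x y)) = 0 := by
          rw [Finset.sum_sub_distrib]
          have h1 : (∑ y, ν y) = 1 := hν.2
          rw [h1, hνsum]; ring
        have h3 := (Finset.sum_eq_zero_iff_of_nonneg
          (fun y _ => sub_nonneg.mpr (hη₀.2.2.1 y))).mp hsum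
        intro y
        have := h3 y (Finset.mem_univ y)
        linarith [sub_eq_zero.mp this]
      have hplan : IsPlan X μ ν η₀ := ⟨hη₀.1, hcol, hrow⟩
      have h1 : W ≤ Tinf X η₀ := hWle _ hplan
      have h2 : Tinf X η₀ ≤ r := by
        obtain ⟨x, y, hxy⟩ := plan_support hμ hplan
        refine csSup_le ⟨_, x, y, hxy, rfl⟩ ?_
        rintro b ⟨x', y', hpos, rfl⟩
        by_contra hb
        push_neg at hb
        exact absurd (hη₀.2.1 x' y' hb) (ne_of_gt hpos)
      linarith
    have hlow : ∀ p : ℝ, 1 ≤ p → W * (1 - M) ^ (1 / p) ≤ Wp X p μ ν := by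
      intro p hp
      have hp0 : (0 : ℝ) < p := lt_of_lt_of_le one_pos hp
      have hbound : ∀ c ∈ C p, W ^ p * (1 - M) ≤ c := by
        rintro c ⟨π, hπ, rfl⟩
        set η : X → X → ℝ :=
          fun x y => if dist (x : Pt n) (y : Pt n) ≤ r then π x y else 0 with hη
        have hπ1 : (∑ x : X, ∑ y : X, π x y) = 1 := by
          have := mass2_of_plan hμ hπ; rwa [mass2] at this
        have hηflow : IsNearbyFlow X r μ ν η := by
          refine ⟨fun x y => ?_, fun x y h => ?_, fun y => ?_, fun x => ?_⟩
          · rw [hη]; dsimp only; split_ifs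
            · exact hπ.1 x y
            · exact le_rfl
          · rw [hη]; dsimp only; rw [if_neg (not_le.mpr h)]
          · calc (∑ x, η x y) ≤ ∑ x, π x y := by
                  refine Finset.sum_le_sum fun x _ => ?_
                  rw [hη]; dsimp only; split_ifs
                  · exact le_rfl
                  · exact hπ.1 x y
              _ = ν y := hπ.2.1 y
          · calc (∑ y, η x y) ≤ ∑ y, π x y := by
                  refine Finset.sum_le_sum fun y _ => ?_
                  rw [hη]; dsimp only; split_ifs
                  · exact le_rfl
                  · exact hπ.1 x y
              _ = μ x := hπ.2.2 x
        have hηM : mass2 X η ≤ M := hmax _ hηflow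
        have hterm : ∀ x y : X,
            W ^ p * (π x y - η x y) ≤ (dist (x : Pt n) (y : Pt n)) ^ p * π x y := by
          intro x y
          by_cases h : dist (x : Pt n) (y : Pt n) ≤ r
          · rw [hη]; dsimp only; rw [if_pos h, sub_self, mul_zero]
            exact mul_nonneg (Real.rpow_nonneg dist_nonneg _) (hπ.1 x y)
          · rw [hη]; dsimp only; rw [if_neg h, sub_zero]
            have hWd : W ≤ dist (x : Pt n) (y : Pt n) := by
              by_contra hc
              push_neg at hc
              exact h (hrle x y hc)
            exact mul_le_mul_of_nonneg_right
              (Real.rpow_le_rpow hW0 hWd (le_of_lt hp0)) (hπ.1 x y)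
        have hdiff : (1 : ℝ) - mass2 X η = ∑ x : X, ∑ y : X, (π x y - η x y) := by
          have h' : (∑ x : X, ∑ y : X, (π x y - η x y))
              = (∑ x : X, ∑ y : X, π x y) - (∑ x : X, ∑ y : X, η x y) := by
            simp only [Finset.sum_sub_distrib]
          rw [h', hπ1]; rfl
        calc W ^ p * (1 - M) ≤ W ^ p * (1 - mass2 X η) :=
              mul_le_mul_of_nonneg_left (by linarith) (Real.rpow_nonneg hW0 p)
          _ = ∑ x : X, ∑ y : X, W ^ p * (π x y - η x y) := by
              rw [hdiff]; simp_rw [Finset.mul_sum]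
          _ ≤ ∑ x : X, ∑ y : X, (dist (x : Pt n) (y : Pt n)) ^ p * π x y :=
              Finset.sum_le_sum fun x _ => Finset.sum_le_sum fun y _ => hterm x y
      have h2 : W ^ p * (1 - M) ≤ sInf (C p) := le_csInf (hCne p) hbound
      rw [hWpC]
      calc W * (1 - M) ^ (1 / p) = (W ^ p * (1 - M)) ^ (1 / p) := by
            rw [Real.mul_rpow (Real.rpow_nonneg hW0 p) (by linarith),
              ← Real.rpow_mul hW0, mul_one_div_cancel hp0.ne', Real.rpow_one]
        _ ≤ (sInf (C p)) ^ (1 / p) := by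
            refine Real.rpow_le_rpow ?_ h2 (by positivity)
            exact mul_nonneg (Real.rpow_nonneg hW0 p) (by linarith)
    have hcpos : (0 : ℝ) < 1 - M := by linarith
    have hc1 : Filter.Tendsto (fun p : ℝ => (1 - M) ^ (1 / p)) Filter.atTop (nhds 1) := by
      have h0 : Filter.Tendsto (fun p : ℝ => Real.log (1 - M) * (1 / p))
          Filter.atTop (nhds 0) := by
        have h := (tendsto_inv_atTop_zero (𝕜 := ℝ)).const_mul (Real.log (1 - M))
        simpa [one_div, mul_zero] using h
      have h1 := (Real.continuous_exp.tendsto 0).comp h0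
      rw [Real.exp_zero] at h1
      refine h1.congr fun p => ?_
      rw [Function.comp_apply, Real.rpow_def_of_pos hcpos]
    have hltend : Filter.Tendsto (fun p : ℝ => W * (1 - M) ^ (1 / p))
        Filter.atTop (nhds W) := by
      have h := hc1.const_mul W
      simpa [mul_one] using h
    refine tendsto_of_tendsto_of_tendsto_of_le_of_le' hltend tendsto_const_nhds ?_ ?_
    · filter_upwards [Filter.eventually_ge_atTop 1] with p hp using hlow p hp
    · filter_upwards [Filter.eventually_ge_atTop 1] with p hp using hupper p hp
  · have hWeq : W = 0 := le_antisymm (not_lt.mp hWpos) hW0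
    rw [hWeq]
    refine tendsto_of_tendsto_of_tendsto_of_le_of_le'
      (tendsto_const_nhds (α := ℝ) (f := Filter.atTop)) tendsto_const_nhds ?_ ?_
    · filter_upwards [Filter.eventually_ge_atTop 1] with p hp
      rw [hWpC]
      exact Real.rpow_nonneg (hInf0 p) _
    · filter_upwards [Filter.eventually_ge_atTop 1] with p hp
      have := hupper p hp
      rwa [hWeq] at this

end WassersteinPaper
end
end
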